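/- arXiv:0803.2247 — 11 statements merged into one kernel-verified Lean document; each statement's English description precedes it below -/
import Mathlib

section
/- For fixed real numbers m < M and x₃ with m < x₃ ≤ M, the function s(a) = [(1-2a(M-x₃))/(1-2a(M-m))]² · (1-4a(M-m))/(1-4a(M-x₃)) is strictly decreasing on the interval [0, 1/(4(M-m))), with s(0) = 1 and s(a) → 0 as a → 1/(4(M-m)). -/
open Filter Set Topology

/-!
With `c = M - m > d = M - x₃ ≥ 0`, the derivative of `s` factors as
`-8a(c - d)(1 - 2ad)(c + d - 6acd) / ((1 - 2ac)³(1 - 4ad)²)`, and every factor has a fixed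
sign on `(0, 1/(4c))`. The function is continuous up to `1/(4c)`, where the factor `1 - 4ac`
of the numerator vanishes while all denominators stay positive.
-/

/-- The function `s` of the statement, with `c = M - m` and `d = M - x₃`. -/
noncomputable def sRatio (c d a : ℝ) : ℝ :=
  ((1 - 2*a*d) / (1 - 2*a*c))^2 * ((1 - 4*a*c) / (1 - 4*a*d))

section

variable {a c d : ℝ}

lemma one_sub_two_mul_mul_pos (h : 4*a*c ≤ 1) : 0 < 1 - 2*a*c := by linarith

lemma one_sub_four_mul_mul_pos (ha : 0 ≤ a) (hdc : d < c) (h : 4*a*c ≤ 1) :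
    0 < 1 - 4*a*d := by
  rcases ha.eq_or_lt with rfl | ha
  · norm_num
  · nlinarith [mul_lt_mul_of_pos_left hdc ha]

lemma sRatio_zero (c d : ℝ) : sRatio c d 0 = 1 := by
  simp [sRatio]

lemma sRatio_inv_four_mul (hc : c ≠ 0) (d : ℝ) : sRatio c d (1/(4*c)) = 0 := by
  have : 1 - 4*(1/(4*c))*c = 0 := by field_simp; ring
  rw [sRatio, this, zero_div, mul_zero]

lemma continuousAt_sRatio (ha : 0 ≤ a) (hdc : d < c) (h : 4*a*c ≤ 1) :
    ContinuousAt (sRatio c d) a := by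
  have h₁ := (one_sub_two_mul_mul_pos h).ne'
  have h₂ := (one_sub_four_mul_mul_pos ha hdc h).ne'
  unfold sRatio
  fun_prop (disch := assumption)

lemma hasDerivAt_sRatio (h₁ : 1 - 2*a*c ≠ 0) (h₂ : 1 - 4*a*d ≠ 0) :
    HasDerivAt (sRatio c d)
      (-8*a*(c - d)*(1 - 2*a*d)*(c + d - 6*a*c*d) / ((1 - 2*a*c)^3 * (1 - 4*a*d)^2)) a := by
  have hlin : ∀ k e : ℝ, HasDerivAt (fun x : ℝ => 1 - k*x*e) (-(k*e)) a := fun k e => by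
    simpa using (((hasDerivAt_id a).const_mul k).mul_const e).const_sub 1
  refine ((((hlin 2 d).fun_div (hlin 2 c) h₁).fun_pow 2).fun_mul
    ((hlin 4 c).fun_div (hlin 4 d) h₂)).congr_deriv ?_
  norm_num
  field_simp
  ring

lemma deriv_sRatio_neg (ha : 0 < a) (hd : 0 ≤ d) (hdc : d < c) (h : 4*a*c < 1) :
    deriv (sRatio c d) a < 0 := by
  have h₁ := one_sub_two_mul_mul_pos h.le
  have h₂ := one_sub_four_mul_mul_pos ha.le hdc h.le
  rw [(hasDerivAt_sRatio h₁.ne' h₂.ne').deriv]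
  have h₃ : 0 < 1 - 2*a*d := by linarith
  -- `6acd ≤ 3d/2 < c + d`, as `4ac < 1` and `0 ≤ d < c`
  have h₄ : 0 < c + d - 6*a*c*d := by nlinarith [mul_le_mul_of_nonneg_left h.le hd]
  apply div_neg_of_neg_of_pos _ (by positivity)
  have := mul_pos (mul_pos (mul_pos ha (sub_pos.2 hdc)) h₃) h₄
  linarith

lemma strictAntiOn_sRatio (hd : 0 ≤ d) (hdc : d < c) :
    StrictAntiOn (sRatio c d) (Ico 0 (1/(4*c))) := by
  have hc : 0 < 4*c := by linarith
  refine strictAntiOn_of_deriv_neg (convex_Ico _ _) (fun a ha => ?_) (fun a ha => ?_)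
  · have h := (le_div_iff₀ hc).1 ha.2.le
    exact (continuousAt_sRatio ha.1 hdc (by linarith)).continuousWithinAt
  · rw [interior_Ico] at ha
    have h := (lt_div_iff₀ hc).1 ha.2
    exact deriv_sRatio_neg ha.1 hd hdc (by linarith)

lemma tendsto_sRatio (hd : 0 ≤ d) (hdc : d < c) :
    Tendsto (sRatio c d) (𝓝[<] (1/(4*c))) (𝓝 0) := by
  have hc : 0 < c := by linarith
  have hL : 4*(1/(4*c))*c = 1 := by field_simp
  have hcont := continuousAt_sRatio (by positivity) hdc hL.le
  rw [← sRatio_inv_four_mul hc.ne' d]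
  exact hcont.tendsto.mono_left nhdsWithin_le_nhds

end

theorem stmt0_general (m M x₃ : ℝ) (hx₃m : m < x₃) (hx₃M : x₃ ≤ M)
    (s : ℝ → ℝ)
    (hs : ∀ a, s a = ((1 - 2*a*(M - x₃)) / (1 - 2*a*(M - m)))^2 *
      ((1 - 4*a*(M - m)) / (1 - 4*a*(M - x₃)))) :
    StrictAntiOn s (Set.Ico 0 (1/(4*(M - m)))) ∧
    s 0 = 1 ∧
    Tendsto s (nhdsWithin (1/(4*(M - m))) (Set.Iio (1/(4*(M - m))))) (nhds 0) := by
  obtain rfl : s = sRatio (M - m) (M - x₃) := funext hs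
  have hd : 0 ≤ M - x₃ := sub_nonneg.2 hx₃M
  have hdc : M - x₃ < M - m := sub_lt_sub_left hx₃m M
  exact ⟨strictAntiOn_sRatio hd hdc, sRatio_zero _ _, tendsto_sRatio hd hdc⟩

/-- For fixed m < M and x₃ ∈ (m, M], the function
s(a) = ((1-2a(M-x₃))/(1-2a(M-m)))² · (1-4a(M-m))/(1-4a(M-x₃))
is strictly decreasing on [0, 1/(4(M-m))), with s(0) = 1 and s(a) → 0 as a → 1/(4(M-m))⁻. -/
theorem stmt0 (m M x₃ : ℝ) (hmM : m < M) (hx₃m : m < x₃) (hx₃M : x₃ ≤ M)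
    (s : ℝ → ℝ)
    (hs : ∀ a, s a = ((1 - 2*a*(M - x₃)) / (1 - 2*a*(M - m)))^2 *
      ((1 - 4*a*(M - m)) / (1 - 4*a*(M - x₃)))) :
    StrictAntiOn s (Set.Ico 0 (1/(4*(M - m)))) ∧
    s 0 = 1 ∧
    Tendsto s (nhdsWithin (1/(4*(M - m))) (Set.Iio (1/(4*(M - m))))) (nhds 0) :=
  stmt0_general m M x₃ hx₃m hx₃M s hs
end

section
/- For fixed real numbers m < M and x₃ with m < x₃ ≤ M, and any value σ ∈ (0, 1], the cubic equation [(1-2a(M-x₃))/(1-2a(M-m))]² · (1-4a(M-m))/(1-4a(M-x₃)) = σ has a unique solution a in the interval [0, 1/(4(M-m))). -/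
/-!
Writing `f(a)` for the left-hand side with `c = M - m > d = M - x₃ ≥ 0`, `f` is continuous on
`[0, 1/(4c)]` with `f 0 = 1` and `f (1/(4c)) = 0`, so the intermediate value theorem gives a root
of `f a = σ`, and it is unique because `f` is strictly decreasing there:
`f' a = -8a (1-2ad) (c²(1-2ad)(1-4ad) - d²(1-2ac)(1-4ac)) / ((1-2ac)³ (1-4ad)²)`,
and the bracket is positive since `c² > d²` and `(1-2ad)(1-4ad) ≥ (1-2ac)(1-4ac) > 0`.
-/

open Set

noncomputable section

def ratioFun (c d a : ℝ) : ℝ :=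
  ((1 - 2*a*d) / (1 - 2*a*c))^2 * ((1 - 4*a*c) / (1 - 4*a*d))

namespace ratioFun

variable {c d a : ℝ}

lemma factors_pos (hdc : d < c) (ha : 0 ≤ a) (hac : 4*a*c ≤ 1) :
    0 < 1 - 2*a*c ∧ 1 - 2*a*c ≤ 1 - 2*a*d ∧ 0 ≤ 1 - 4*a*c ∧ 0 < 1 - 4*a*d := by
  have had : a*d ≤ a*c := mul_le_mul_of_nonneg_left hdc.le ha
  refine ⟨by linarith, by linarith, by linarith, ?_⟩
  rcases ha.eq_or_lt with rfl | ha
  · norm_num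
  · nlinarith [mul_lt_mul_of_pos_left hdc ha]

lemma mem_Icc_iff (hc : 0 < c) : a ∈ Icc 0 (1/(4*c)) ↔ 0 ≤ a ∧ 4*a*c ≤ 1 := by
  rw [mem_Icc, le_div_iff₀ (by positivity), show a * (4*c) = 4*a*c by ring]

@[simp] lemma apply_zero : ratioFun c d 0 = 1 := by simp [ratioFun]

lemma apply_inv_four_mul (hc : c ≠ 0) : ratioFun c d (1/(4*c)) = 0 := by
  have : 1 - 4 * (1/(4*c)) * c = 0 := by field_simp; ring
  rw [ratioFun, this, zero_div, mul_zero]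

lemma continuousOn (hd : 0 ≤ d) (hdc : d < c) : ContinuousOn (ratioFun c d) (Icc 0 (1/(4*c))) := by
  have hc : 0 < c := hd.trans_lt hdc
  have hpos : ∀ a ∈ Icc 0 (1/(4*c)), 0 < 1 - 2*a*c ∧ 0 < 1 - 4*a*d := fun a ha ↦ by
    obtain ⟨ha, hac⟩ := (mem_Icc_iff hc).1 ha
    obtain ⟨hD, -, -, hQ⟩ := factors_pos hdc ha hac
    exact ⟨hD, hQ⟩
  unfold ratioFun
  exact (ContinuousOn.pow (.div (by fun_prop) (by fun_prop) fun a ha ↦ (hpos a ha).1.ne') 2).mul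
    (.div (by fun_prop) (by fun_prop) fun a ha ↦ (hpos a ha).2.ne')

lemma hasDerivAt (hD : 1 - 2*a*c ≠ 0) (hQ : 1 - 4*a*d ≠ 0) :
    HasDerivAt (ratioFun c d)
      (-8*a*(1 - 2*a*d) * (c^2*(1 - 2*a*d)*(1 - 4*a*d) - d^2*(1 - 2*a*c)*(1 - 4*a*c)) /
        ((1 - 2*a*c)^3 * (1 - 4*a*d)^2)) a := by
  have hlin : ∀ k l : ℝ, HasDerivAt (fun x ↦ 1 - k*x*l) (-(k*l)) a := fun k l ↦ by
    simpa [mul_right_comm k] using ((hasDerivAt_id a).const_mul (k*l)).const_sub 1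
  refine ((((hlin 2 d).div (hlin 2 c) hD).pow 2).mul ((hlin 4 c).div (hlin 4 d) hQ)).congr_deriv ?_
  norm_num [Pi.div_apply, Pi.pow_apply]
  field_simp
  ring

lemma deriv_neg (hd : 0 ≤ d) (hdc : d < c) (ha : 0 < a) (hac : 4*a*c < 1) :
    deriv (ratioFun c d) a < 0 := by
  obtain ⟨hD, hDN, -, hQ⟩ := factors_pos hdc ha.le hac.le
  have hP : 0 < 1 - 4*a*c := by linarith
  rw [(hasDerivAt hD.ne' hQ.ne').deriv]
  have hbracket : d^2*(1 - 2*a*c)*(1 - 4*a*c) < c^2*(1 - 2*a*d)*(1 - 4*a*d) := by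
    have hsq : d^2 < c^2 := by nlinarith
    have hPQ : 1 - 4*a*c ≤ 1 - 4*a*d := by linarith
    calc d^2*(1 - 2*a*c)*(1 - 4*a*c) < c^2*(1 - 2*a*c)*(1 - 4*a*c) := by gcongr
      _ ≤ c^2*(1 - 2*a*d)*(1 - 4*a*d) := by gcongr; nlinarith
  apply div_neg_of_neg_of_pos _ (by positivity)
  have : 0 < 8*a*(1 - 2*a*d) := by nlinarith
  nlinarith

lemma strictAntiOn (hd : 0 ≤ d) (hdc : d < c) : StrictAntiOn (ratioFun c d) (Icc 0 (1/(4*c))) := by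
  have hc : 0 < c := hd.trans_lt hdc
  refine strictAntiOn_of_deriv_neg (convex_Icc _ _) (continuousOn hd hdc) fun a ha ↦ ?_
  rw [interior_Icc, mem_Ioo, lt_div_iff₀ (by positivity)] at ha
  exact deriv_neg hd hdc ha.1 (by linarith)

theorem existsUnique_eq (hd : 0 ≤ d) (hdc : d < c) {σ : ℝ} (hσ0 : 0 < σ) (hσ1 : σ ≤ 1) :
    ∃! a, a ∈ Ico 0 (1/(4*c)) ∧ ratioFun c d a = σ := by
  have hc : 0 < c := hd.trans_lt hdc
  have hσ : σ ∈ Icc (ratioFun c d (1/(4*c))) (ratioFun c d 0) := by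
    rw [apply_zero, apply_inv_four_mul hc.ne']
    exact ⟨hσ0.le, hσ1⟩
  obtain ⟨a, ha, hfa⟩ := intermediate_value_Icc' (by positivity) (continuousOn hd hdc) hσ
  have ha_ne : a ≠ 1/(4*c) := by
    rintro rfl
    rw [apply_inv_four_mul hc.ne'] at hfa
    exact hσ0.ne hfa
  refine ⟨a, ⟨⟨ha.1, ha.2.lt_of_ne ha_ne⟩, hfa⟩, fun b ⟨hb, hfb⟩ ↦ ?_⟩
  exact (strictAntiOn hd hdc).injOn (Ico_subset_Icc_self hb) ha (hfb.trans hfa.symm)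

end ratioFun

end

theorem stmt1_general (m M x₃ σ : ℝ) (hx₃m : m < x₃) (hx₃M : x₃ ≤ M)
    (hσ0 : 0 < σ) (hσ1 : σ ≤ 1) :
    ∃! a : ℝ, a ∈ Set.Ico 0 (1/(4*(M - m))) ∧
      ((1 - 2*a*(M - x₃)) / (1 - 2*a*(M - m)))^2 *
        ((1 - 4*a*(M - m)) / (1 - 4*a*(M - x₃))) = σ :=
  ratioFun.existsUnique_eq (by linarith) (by linarith) hσ0 hσ1

/-- For fixed m < M, x₃ ∈ (m, M] and σ ∈ (0, 1], the cubic equation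
((1-2a(M-x₃))/(1-2a(M-m)))² · (1-4a(M-m))/(1-4a(M-x₃)) = σ
has a unique solution a ∈ [0, 1/(4(M-m))). -/
theorem stmt1 (m M x₃ σ : ℝ) (hmM : m < M) (hx₃m : m < x₃) (hx₃M : x₃ ≤ M)
    (hσ0 : 0 < σ) (hσ1 : σ ≤ 1) :
    ∃! a : ℝ, a ∈ Set.Ico 0 (1/(4*(M - m))) ∧
      ((1 - 2*a*(M - x₃)) / (1 - 2*a*(M - m)))^2 *
        ((1 - 4*a*(M - m)) / (1 - 4*a*(M - x₃))) = σ :=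
  stmt1_general m M x₃ σ hx₃m hx₃M hσ0 hσ1
end

section
/- For fixed real numbers m < M and x₃ with m < x₃ ≤ M, the function s(a) = [(1-2a(M-x₃))/(1-2a(M-m))]² · (1-4a(M-m))/(1-4a(M-x₃)) is strictly increasing on (-∞, 0], tends to (M-x₃)/(M-m) as a → -∞, and equals 1 at a = 0. Hence for σ ∈ ((M-x₃)/(M-m), 1) there is a unique negative solution a⁻ of s(a) = σ. -/
/-!
Write `p = M - x₃` and `q = M - m`, so that `0 ≤ p < q`. The numerator of the derivative of `s`
factors as `-8a (q - p) (p + q - 6apq) (1 - 2ap) (1 - 2aq)`, which is positive for `a < 0`.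
For the limit, `s a - p / q = (q - p) (1 - 4a(p + q) + 12a²pq) / (q (1 - 2aq)² (1 - 4ap))`,
which lies between `0` and `3 (q - p) / (q (1 - 2aq))`. The solution `a⁻` then exists by the
intermediate value theorem and is unique by strict monotonicity.
-/

open Filter Set Topology

noncomputable def sFun (p q a : ℝ) : ℝ :=
  ((1 - 2*a*p) / (1 - 2*a*q))^2 * ((1 - 4*a*q) / (1 - 4*a*p))

lemma one_sub_mul_mul_pos {k a c : ℝ} (hk : 0 ≤ k) (ha : a ≤ 0) (hc : 0 ≤ c) :
    0 < 1 - k*a*c := by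
  nlinarith [mul_nonneg (mul_nonneg hk (neg_nonneg.2 ha)) hc]

theorem StrictMonoOn.existsUnique_lt_eq_of_tendsto_atBot {f : ℝ → ℝ} {b L σ : ℝ}
    (hmono : StrictMonoOn f (Iic b)) (hcont : ContinuousOn f (Iic b))
    (hlim : Tendsto f atBot (𝓝 L)) (hLσ : L < σ) (hσb : σ < f b) :
    ∃! a, a < b ∧ f a = σ := by
  obtain ⟨a₀, ha₀σ, ha₀b⟩ :=
    ((hlim.eventually_lt_const hLσ).and (eventually_lt_atBot b)).exists
  obtain ⟨c, hc, hcσ⟩ := intermediate_value_Icc ha₀b.le (hcont.mono Icc_subset_Iic_self)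
    ⟨ha₀σ.le, hσb.le⟩
  have hcb : c < b := hc.2.lt_of_ne (by rintro rfl; exact hσb.ne' hcσ)
  refine ⟨c, ⟨hcb, hcσ⟩, fun a ha => ?_⟩
  exact hmono.injOn (mem_Iic.2 ha.1.le) (mem_Iic.2 hcb.le) (ha.2.trans hcσ.symm)

section
variable {p q : ℝ}

lemma hasDerivAt_sFun (hp : 0 ≤ p) (hq : 0 ≤ q) {a : ℝ} (ha : a ≤ 0) :
    HasDerivAt (sFun p q)
      (8*(-a)*(q - p)*(p + q - 6*a*p*q)*(1 - 2*a*p) / ((1 - 2*a*q)^3*(1 - 4*a*p)^2)) a := by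
  have h2q := one_sub_mul_mul_pos zero_le_two ha hq
  have h4p := one_sub_mul_mul_pos zero_le_four ha hp
  have hlin (k c : ℝ) : HasDerivAt (fun x => 1 - k*x*c) (-(k*c)) a := by
    simpa using (((hasDerivAt_id a).const_mul k).mul_const c).const_sub 1
  refine ((((hlin 2 p).fun_div (hlin 2 q) h2q.ne').fun_pow 2).fun_mul
    ((hlin 4 q).fun_div (hlin 4 p) h4p.ne')).congr_deriv ?_
  simp only [Nat.cast_ofNat, Nat.reduceSub, pow_one]
  field_simp
  ring

lemma continuousOn_sFun (hp : 0 ≤ p) (hq : 0 ≤ q) : ContinuousOn (sFun p q) (Iic 0) :=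
  fun _ ha => (hasDerivAt_sFun hp hq ha).continuousAt.continuousWithinAt

lemma strictMonoOn_sFun (hp : 0 ≤ p) (hpq : p < q) : StrictMonoOn (sFun p q) (Iic 0) := by
  have hq : 0 ≤ q := hp.trans hpq.le
  refine strictMonoOn_of_deriv_pos (convex_Iic 0) (continuousOn_sFun hp hq) fun a ha => ?_
  rw [interior_Iic, mem_Iio] at ha
  rw [(hasDerivAt_sFun hp hq ha.le).deriv]
  have hfactor : 0 < p + q - 6*a*p*q := by
    nlinarith [mul_nonneg (mul_nonneg (neg_nonneg.2 ha.le) hp) hq]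
  have h2p := one_sub_mul_mul_pos zero_le_two ha.le hp
  have h2q := one_sub_mul_mul_pos zero_le_two ha.le hq
  have h4p := one_sub_mul_mul_pos zero_le_four ha.le hp
  have hna : 0 < -a := neg_pos.2 ha
  have hqp : 0 < q - p := sub_pos.2 hpq
  positivity

lemma sFun_sub_div (hp : 0 ≤ p) (hq : 0 < q) {a : ℝ} (ha : a ≤ 0) :
    sFun p q a - p / q =
      (q - p)*(1 - 4*a*(p + q) + 12*a^2*p*q) / (q*(1 - 2*a*q)^2*(1 - 4*a*p)) := by
  have h2q := one_sub_mul_mul_pos zero_le_two ha hq.le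
  have h4p := one_sub_mul_mul_pos zero_le_four ha hp
  rw [sFun, div_pow, div_mul_div_comm, div_sub_div _ _ (by positivity) hq.ne',
    div_eq_div_iff (by positivity) (by positivity)]
  ring

lemma div_lt_sFun (hp : 0 ≤ p) (hpq : p < q) {a : ℝ} (ha : a ≤ 0) : p / q < sFun p q a := by
  have hq : 0 < q := hp.trans_lt hpq
  have h2q := one_sub_mul_mul_pos zero_le_two ha hq.le
  have h4p := one_sub_mul_mul_pos zero_le_four ha hp
  have hqp : 0 < q - p := sub_pos.2 hpq
  have hnum : 0 < 1 - 4*a*(p + q) + 12*a^2*p*q := by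
    nlinarith [one_sub_mul_mul_pos zero_le_four ha (add_nonneg hp hq.le), mul_nonneg hp hq.le]
  have hdiff : 0 < sFun p q a - p / q := by rw [sFun_sub_div hp hq ha]; positivity
  linarith

lemma sFun_sub_div_le (hp : 0 ≤ p) (hpq : p < q) {a : ℝ} (ha : a ≤ 0) :
    sFun p q a - p / q ≤ 3*(q - p) / (q*(1 - 2*a*q)) := by
  have hq : 0 < q := hp.trans_lt hpq
  have h2q := one_sub_mul_mul_pos zero_le_two ha hq.le
  have h4p := one_sub_mul_mul_pos zero_le_four ha hp
  have hqp : 0 < q - p := sub_pos.2 hpq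
  have hnum : 1 - 4*a*(p + q) + 12*a^2*p*q ≤ 3*((1 - 2*a*q)*(1 - 4*a*p)) := by
    nlinarith [mul_nonneg (neg_nonneg.2 ha) hp, mul_nonneg (neg_nonneg.2 ha) hq.le]
  rw [sFun_sub_div hp hq ha, div_le_div_iff₀ (by positivity) (by positivity)]
  calc (q - p)*(1 - 4*a*(p + q) + 12*a^2*p*q) * (q*(1 - 2*a*q))
      = ((q - p)*q*(1 - 2*a*q)) * (1 - 4*a*(p + q) + 12*a^2*p*q) := by ring
    _ ≤ ((q - p)*q*(1 - 2*a*q)) * (3*((1 - 2*a*q)*(1 - 4*a*p))) := by gcongr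
    _ = 3*(q - p) * (q*(1 - 2*a*q)^2*(1 - 4*a*p)) := by ring

lemma tendsto_sFun_atBot (hp : 0 ≤ p) (hpq : p < q) :
    Tendsto (sFun p q) atBot (𝓝 (p / q)) := by
  have hq : 0 < q := hp.trans_lt hpq
  have hden : Tendsto (fun a : ℝ => q*(1 - 2*a*q)) atBot atTop := by
    refine (tendsto_atTop_add_const_left _ q
      (tendsto_id.const_mul_atBot_of_neg (r := -(2*q^2)) (by nlinarith))).congr fun a => ?_
    simp only [id]
    ring
  have hupper : Tendsto (fun a : ℝ => p / q + 3*(q - p) / (q*(1 - 2*a*q))) atBot (𝓝 (p / q)) := by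
    simpa using (tendsto_const_nhds.div_atTop hden).const_add (p / q)
  refine tendsto_of_tendsto_of_tendsto_of_le_of_le' tendsto_const_nhds hupper ?_ ?_
  · filter_upwards [eventually_le_atBot 0] with a ha using (div_lt_sFun hp hpq ha).le
  · filter_upwards [eventually_le_atBot 0] with a ha
    linarith [sFun_sub_div_le hp hpq ha]

end

theorem stmt2_general (m M x₃ : ℝ) (hx₃m : m < x₃) (hx₃M : x₃ ≤ M)
    (s : ℝ → ℝ)
    (hs : ∀ a, s a = ((1 - 2*a*(M - x₃)) / (1 - 2*a*(M - m)))^2 *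
      ((1 - 4*a*(M - m)) / (1 - 4*a*(M - x₃)))) :
    StrictMonoOn s (Set.Iic 0) ∧
    Tendsto s atBot (nhds ((M - x₃)/(M - m))) ∧
    s 0 = 1 ∧
    ∀ σ : ℝ, (M - x₃)/(M - m) < σ → σ < 1 → ∃! a : ℝ, a < 0 ∧ s a = σ := by
  obtain rfl : s = sFun (M - x₃) (M - m) := funext hs
  have hp : 0 ≤ M - x₃ := sub_nonneg.2 hx₃M
  have hpq : M - x₃ < M - m := by linarith
  have hmono := strictMonoOn_sFun hp hpq
  have hlim := tendsto_sFun_atBot hp hpq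
  have h0 : sFun (M - x₃) (M - m) 0 = 1 := by simp [sFun]
  refine ⟨hmono, hlim, h0, fun σ hσ hσ1 => ?_⟩
  exact hmono.existsUnique_lt_eq_of_tendsto_atBot
    (continuousOn_sFun hp (hp.trans hpq.le)) hlim hσ (h0 ▸ hσ1)

/-- s(a) is strictly increasing on (-∞,0], tends to (M-x₃)/(M-m) as a → -∞,
equals 1 at a = 0; hence for σ ∈ ((M-x₃)/(M-m), 1) there is a unique negative solution of
s(a) = σ. -/
theorem stmt2 (m M x₃ : ℝ) (hmM : m < M) (hx₃m : m < x₃) (hx₃M : x₃ ≤ M)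
    (s : ℝ → ℝ)
    (hs : ∀ a, s a = ((1 - 2*a*(M - x₃)) / (1 - 2*a*(M - m)))^2 *
      ((1 - 4*a*(M - m)) / (1 - 4*a*(M - x₃)))) :
    StrictMonoOn s (Set.Iic 0) ∧
    Tendsto s atBot (nhds ((M - x₃)/(M - m))) ∧
    s 0 = 1 ∧
    ∀ σ : ℝ, (M - x₃)/(M - m) < σ → σ < 1 → ∃! a : ℝ, a < 0 ∧ s a = σ :=
  stmt2_general m M x₃ hx₃m hx₃M s hs
end

section
/- As x₃ → m⁺ (equivalently a → 1/(4(M-m))⁻ along the foliation), the function B(x₁, x₂, x₃; m, M) extends continuously to the lower lid x₃ = m with limit value B(x₁, x₂, m; m, M) = 4(M-m)(x₂ - x₁²) + m x₂. -/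
/-!
Write `δ = M - m`, `τ = M - x₃`. Since `1 - 2aδ ≤ 1 - 2aτ`, the cubic equation for `a` forces
`x₂ (1 - 4aδ) ≤ x₁² (1 - 4aτ)`, i.e. `(x₂ - x₁²)(1 - 4aδ) ≤ 4a x₁² (x₃ - m)`. Together with
`a < 1/(4δ)` this squeezes `a(x₃) → 1/(4δ)` as `x₃ → m⁺`. The expression for `B` is continuous in
`(a, x₃)` at `(1/(4δ), m)`, where it equals `4δ(x₂ - x₁²) + m x₂`.
-/

open Filter Set Topology

/-- The cubic equation for the foliation parameter `t = a`, with `δ = M - m` and `τ = M - x₃`. -/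
def FoliationEq (x₁ x₂ t δ τ : ℝ) : Prop :=
  x₁^2/x₂ = ((1 - 2*t*τ)/(1 - 2*t*δ))^2 * ((1 - 4*t*δ)/(1 - 4*t*τ))

namespace FoliationEq

variable {x₁ x₂ t δ τ : ℝ}

theorem mul_le (h : FoliationEq x₁ x₂ t δ τ) (ht : 0 ≤ t) (hτδ : τ ≤ δ) (htδ : 4*t*δ < 1) :
    x₂ * (1 - 4*t*δ) ≤ x₁^2 * (1 - 4*t*τ) := by
  have htτ : t * τ ≤ t * δ := mul_le_mul_of_nonneg_left hτδ ht
  have hv : 0 < 1 - 4*t*τ := by linarith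
  have hp : 0 < 1 - 2*t*δ := by linarith
  have hpq : 1 - 2*t*δ ≤ 1 - 2*t*τ := by linarith
  rcases eq_or_ne x₂ 0 with rfl | hx₂
  · rw [zero_mul]; positivity
  unfold FoliationEq at h
  rw [div_pow, div_mul_div_comm, div_eq_div_iff hx₂ (by positivity)] at h
  refine le_of_mul_le_mul_right ?_ (pow_pos (hp.trans_le hpq) 2)
  calc x₂ * (1 - 4*t*δ) * (1 - 2*t*τ)^2 = x₁^2 * (1 - 4*t*τ) * (1 - 2*t*δ)^2 := by
        linear_combination -h
    _ ≤ x₁^2 * (1 - 4*t*τ) * (1 - 2*t*τ)^2 := by gcongr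

theorem inv_sub_le (h : FoliationEq x₁ x₂ t δ τ) (hx : x₁^2 < x₂) (ht : 0 < t) (hδ : 0 < δ)
    (hτδ : τ ≤ δ) (htδ : 4*t*δ < 1) :
    1/(4*δ) - t ≤ x₁^2 * (δ - τ) / (4*δ^2*(x₂ - x₁^2)) := by
  have hmul := h.mul_le ht.le hτδ htδ
  have hgap : 0 ≤ x₁^2 * (δ - τ) := mul_nonneg (sq_nonneg x₁) (sub_nonneg.2 hτδ)
  rw [div_sub' (by positivity), div_le_div_iff₀ (by positivity)
    (mul_pos (by positivity) (sub_pos.2 hx))]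
  nlinarith [mul_le_mul_of_nonneg_right htδ.le hgap, mul_le_mul_of_nonneg_left hmul hδ.le]

end FoliationEq

theorem tendsto_foliationParam_nhdsGT {m M x₁ x₂ : ℝ} {a : ℝ → ℝ} (hmM : m < M)
    (hx : x₁^2 < x₂) (haI : ∀ x₃ ∈ Ioc m M, a x₃ ∈ Ioo 0 (1/(4*(M - m))))
    (ha : ∀ x₃ ∈ Ioc m M, FoliationEq x₁ x₂ (a x₃) (M - m) (M - x₃)) :
    Tendsto a (𝓝[>] m) (𝓝 (1/(4*(M - m)))) := by
  have hδ : 0 < M - m := sub_pos.2 hmM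
  set D := 4*(M - m)^2*(x₂ - x₁^2)
  have hlower : Tendsto (fun x₃ => 1/(4*(M - m)) - x₁^2 * (x₃ - m) / D) (𝓝[>] m)
      (𝓝 (1/(4*(M - m)))) := by
    refine tendsto_nhdsWithin_of_tendsto_nhds (Continuous.tendsto' ?_ m _ (by simp))
    fun_prop
  have hIoc : Ioc m M ∈ 𝓝[>] m := Ioc_mem_nhdsGT hmM
  refine tendsto_of_tendsto_of_tendsto_of_le_of_le' hlower tendsto_const_nhds ?_ ?_
  · filter_upwards [hIoc] with x₃ hx₃
    obtain ⟨ht, htδ⟩ := haI x₃ hx₃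
    have htδ' : 4 * a x₃ * (M - m) < 1 := by
      rw [lt_div_iff₀ (by positivity)] at htδ; linarith
    have h := (ha x₃ hx₃).inv_sub_le hx ht hδ (by linarith [hx₃.1]) htδ'
    rw [sub_sub_sub_cancel_left] at h
    linarith
  · filter_upwards [hIoc] with x₃ hx₃ using (haI x₃ hx₃).2.le

/-- `B(x₁, x₂, x₃; m, M)` as a function of the foliation parameter `t = a` and of `x₃`. -/
noncomputable def bellmanB (m M x₁ x₂ t x₃ : ℝ) : ℝ :=
  -x₁^2/(2*t*(1 - 2*t*(M - x₃))) + (m + 1/(2*t*(1 - 2*t*(M - m))))*x₂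

theorem continuousAt_bellmanB {m M x₁ x₂ t x₃ : ℝ} (ht : t ≠ 0)
    (hx₃ : 1 - 2*t*(M - x₃) ≠ 0) (hm : 1 - 2*t*(M - m) ≠ 0) :
    ContinuousAt (fun p : ℝ × ℝ => bellmanB m M x₁ x₂ p.1 p.2) (t, x₃) := by
  unfold bellmanB
  fun_prop (disch := simp [ht, hx₃, hm])

theorem bellmanB_lowerLid {m M x₁ x₂ : ℝ} (hmM : m ≠ M) :
    bellmanB m M x₁ x₂ (1/(4*(M - m))) m = 4*(M - m)*(x₂ - x₁^2) + m*x₂ := by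
  have : M - m ≠ 0 := sub_ne_zero.2 hmM.symm
  unfold bellmanB
  field_simp
  ring

/-- As x₃ → m⁺, the function B(x₁,x₂,x₃;m,M) (in the form \eqref{firstB})
extends continuously to the lower lid with limit 4(M-m)(x₂-x₁²) + m x₂. -/
theorem stmt7 (m M x₁ x₂ : ℝ) (hmM : m < M) (hx : x₁^2 < x₂)
    (a : ℝ → ℝ)
    (haI : ∀ x₃ ∈ Set.Ioc m M, a x₃ ∈ Set.Ioo 0 (1/(4*(M - m))))
    (ha : ∀ x₃ ∈ Set.Ioc m M, x₁^2/x₂ =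
      ((1 - 2*(a x₃)*(M - x₃))/(1 - 2*(a x₃)*(M - m)))^2 *
      ((1 - 4*(a x₃)*(M - m))/(1 - 4*(a x₃)*(M - x₃)))) :
    Tendsto (fun x₃ => -x₁^2/(2*(a x₃)*(1 - 2*(a x₃)*(M - x₃)))
        + (m + 1/(2*(a x₃)*(1 - 2*(a x₃)*(M - m))))*x₂)
      (nhdsWithin m (Set.Ioi m)) (nhds (4*(M - m)*(x₂ - x₁^2) + m*x₂)) := by
  have hδ : M - m ≠ 0 := sub_ne_zero.2 hmM.ne'
  have hlid : 1 - 2*(1/(4*(M - m)))*(M - m) ≠ 0 := by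
    field_simp; norm_num
  have hB := (continuousAt_bellmanB (x₁ := x₁) (x₂ := x₂) (by positivity) hlid hlid).tendsto.comp
    ((tendsto_foliationParam_nhdsGT hmM hx haI ha).prodMk_nhds
      (tendsto_id.mono_left nhdsWithin_le_nhds))
  rwa [bellmanB_lowerLid hmM.ne] at hB
end

section
/- For all x₁, x₂, x₃ with x₁² ≤ x₂, x₂ > 0, and m < x₃ ≤ M, the candidate Bellman function satisfies B(x₁, x₂, x₃; m, M) ≥ x₂ · x₃. -/
/-- For x₁² ≤ x₂, x₂ > 0, m < x₃ ≤ M, the candidate Bellman function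
satisfies B(x₁,x₂,x₃;m,M) ≥ x₂·x₃. -/
theorem stmt8 (m M x₁ x₂ x₃ a : ℝ) (hmM : m < M) (hx2 : 0 < x₂) (hx12 : x₁^2 ≤ x₂)
    (hx3 : m < x₃) (hx3' : x₃ ≤ M)
    (haI : a ∈ Set.Ico 0 (1/(4*(M - m))))
    (ha : x₁^2/x₂ = ((1 - 2*a*(M - x₃))/(1 - 2*a*(M - m)))^2 *
      ((1 - 4*a*(M - m))/(1 - 4*a*(M - x₃)))) :
    (x₃ - m)*x₂/((1 - 2*a*(M - m))^2*(1 - 4*a*(M - x₃))) + m*x₂ ≥ x₂ * x₃ := by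
  obtain ⟨ha0, ha1⟩ := haI
  have hMm : 0 < M - m := by linarith
  have h4 : 4*a*(M-m) < 1 := by
    rw [lt_div_iff₀ (by positivity)] at ha1; nlinarith
  have hA : 0 < 1 - 2*a*(M-m) := by nlinarith
  have hB : 0 < 1 - 4*a*(M-x₃) := by nlinarith [mul_le_mul_of_nonneg_left (by linarith : M - x₃ ≤ M - m) ha0]
  have hD : 0 < (1 - 2*a*(M - m))^2*(1 - 4*a*(M - x₃)) := by positivity
  have hD1 : (1 - 2*a*(M - m))^2*(1 - 4*a*(M - x₃)) ≤ 1 := by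
    nlinarith [mul_nonneg ha0 hMm.le, mul_nonneg ha0 (by linarith : (0:ℝ) ≤ M - x₃), sq_nonneg (a*(M-m))]
  have key : (x₃ - m)*x₂/((1 - 2*a*(M - m))^2*(1 - 4*a*(M - x₃))) ≥ (x₃ - m)*x₂ := by
    rw [ge_iff_le, le_div_iff₀ hD]
    nlinarith [mul_pos (by linarith : (0:ℝ) < x₃ - m) hx2]
  linarith
end

section
/- For m=0, M=1, the partial derivative ∂B/∂x₃ equals x₁²/[1-2a(1-x₃)]², and in particular ∂B/∂x₃(x) ≥ x₁² for all x in the domain {x₁² ≤ x₂, 0 < x₃ ≤ 1}. -/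
/-!
With `Q = (1-2a)²(1-4a(1-y))` and `P = (1-2a(1-y))²(1-4a)` the defining equation of `a` is
`c Q = P` with `c = x₁²/x₂`, and `B = y x₂ / Q`. Differentiating `c Q(a(y), y) = P(a(y), y)` and
clearing denominators gives `a (1-2a) (1-2a(1-y)) K = 0` with
`K = a' y (2-y-6a(1-y)) + a (1-2a)(1-4a)(1-y)`; where `a = 0` the nonnegative function `a` is
minimal, so `a' = 0` and again `K = 0`. Since `Q - y Q' = (1-4a) Q + 4 (1-2a) K`, the derivative of
`B` is `x₂ (1-4a) / Q = c x₂ / (1-2a(1-y))²`. The inequality holds because `0 < 1-2a(1-y) ≤ 1`.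
-/

open Set Filter Topology

namespace ImplicitRoot

/-- The defining equation of `a` reads `x₁² / x₂ = rootNum a x₃ / rootDen a x₃`, and
`B = x₃ x₂ / rootDen a x₃`. -/
def rootDen (a y : ℝ) : ℝ := (1 - 2 * a) ^ 2 * (1 - 4 * a * (1 - y))

def rootNum (a y : ℝ) : ℝ := (1 - 2 * a * (1 - y)) ^ 2 * (1 - 4 * a)

lemma one_sub_mul_mul_pos {k a y : ℝ} (hk : k ≤ 4) (ha : a ∈ Ico 0 (1 / 4))
    (hy : y ∈ Icc 0 1) : 0 < 1 - k * a * (1 - y) := by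
  obtain ⟨ha₀, ha₁⟩ := ha
  obtain ⟨hy₀, hy₁⟩ := hy
  nlinarith [mul_nonneg ha₀ (sub_nonneg.2 hy₁)]

lemma rootDen_pos {a y : ℝ} (ha : a ∈ Ico 0 (1 / 4)) (hy : y ∈ Icc 0 1) :
    0 < rootDen a y := by
  have : 0 < 1 - 2 * a := by linarith [ha.2]
  have := one_sub_mul_mul_pos le_rfl ha hy
  unfold rootDen
  positivity

lemma div_sq_mul_div_eq_rootNum_div_rootDen (a y : ℝ) :
    ((1 - 2 * a * (1 - y)) / (1 - 2 * a)) ^ 2 * ((1 - 4 * a) / (1 - 4 * a * (1 - y))) =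
      rootNum a y / rootDen a y := by
  rw [div_pow, div_mul_div_comm, rootNum, rootDen]

section Derivatives

variable {a : ℝ → ℝ} {a' y : ℝ}

lemma hasDerivAt_rootDen (h : HasDerivAt a a' y) :
    HasDerivAt (fun y => rootDen (a y) y)
      (-4 * a' * (1 - 2 * a y) * (1 - 4 * a y * (1 - y))
        + 4 * (1 - 2 * a y) ^ 2 * (a y - a' * (1 - y))) y :=
  ((((h.const_mul 2).const_sub 1).fun_pow 2).fun_mul
    (((h.const_mul 4).fun_mul ((hasDerivAt_id' y).const_sub 1)).const_sub 1)).congr_deriv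
    (by ring)

lemma hasDerivAt_rootNum (h : HasDerivAt a a' y) :
    HasDerivAt (fun y => rootNum (a y) y)
      (4 * (1 - 2 * a y * (1 - y)) * (a y - a' * (1 - y)) * (1 - 4 * a y)
        - 4 * a' * (1 - 2 * a y * (1 - y)) ^ 2) y :=
  (((((h.const_mul 2).fun_mul ((hasDerivAt_id' y).const_sub 1)).const_sub 1).fun_pow 2).fun_mul
    ((h.const_mul 4).const_sub 1)).congr_deriv (by ring)

end Derivatives

lemma root_deriv_identity_of_eq {c a a' y : ℝ} (hc : c * rootDen a y = rootNum a y)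
    (hd : c * (-4 * a' * (1 - 2 * a) * (1 - 4 * a * (1 - y))
        + 4 * (1 - 2 * a) ^ 2 * (a - a' * (1 - y))) =
      4 * (1 - 2 * a * (1 - y)) * (a - a' * (1 - y)) * (1 - 4 * a)
        - 4 * a' * (1 - 2 * a * (1 - y)) ^ 2) :
    a * (1 - 2 * a) * (1 - 2 * a * (1 - y)) *
      (a' * y * (2 - y - 6 * a * (1 - y)) + a * (1 - 2 * a) * (1 - 4 * a) * (1 - y)) = 0 := by
  unfold rootDen rootNum at hc
  linear_combination (1 / 8 * (1 - 2 * a) ^ 2 * (1 - 4 * a * (1 - y))) * hd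
    - (1 / 8 * (-4 * a' * (1 - 2 * a) * (1 - 4 * a * (1 - y))
        + 4 * (1 - 2 * a) ^ 2 * (a - a' * (1 - y)))) * hc

theorem root_deriv_identity {a : ℝ → ℝ} {a' c y₀ : ℝ} (hy₀ : y₀ ∈ Icc 0 1)
    (hda : HasDerivAt a a' y₀) (hnonneg : ∀ᶠ y in 𝓝 y₀, 0 ≤ a y) (ha₀ : a y₀ < 1 / 4)
    (hrel : ∀ᶠ y in 𝓝 y₀, c * rootDen (a y) y = rootNum (a y) y) :
    a' * y₀ * (2 - y₀ - 6 * a y₀ * (1 - y₀))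
      + a y₀ * (1 - 2 * a y₀) * (1 - 4 * a y₀) * (1 - y₀) = 0 := by
  rcases eq_or_ne (a y₀) 0 with h₀ | h₀
  · -- the implicit equation degenerates at `a = 0`, but there `a ≥ 0` is minimal
    have ha' : a' = 0 := IsLocalMin.hasDerivAt_eq_zero (hnonneg.mono fun y hy => h₀ ▸ hy) hda
    simp [h₀, ha']
  · have hd := ((hasDerivAt_rootDen hda).const_mul c).unique
      ((hasDerivAt_rootNum hda).congr_of_eventuallyEq hrel)
    have h₂ : 1 - 2 * a y₀ ≠ 0 := by linarith
    have hU : 1 - 2 * a y₀ * (1 - y₀) ≠ 0 :=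
      (one_sub_mul_mul_pos (by norm_num) ⟨hnonneg.self_of_nhds, ha₀⟩ hy₀).ne'
    simpa [h₀, h₂, hU] using root_deriv_identity_of_eq hrel.self_of_nhds hd

end ImplicitRoot

open ImplicitRoot in
theorem stmt9_general (x₁ x₂ x₃ a' : ℝ) (hx2 : 0 < x₂)
    (hx3 : 0 < x₃) (hx3' : x₃ < 1)
    (a : ℝ → ℝ)
    (haI : ∀ y ∈ Set.Ioc (0:ℝ) 1, a y ∈ Set.Ico (0:ℝ) (1/4))
    (ha : ∀ y ∈ Set.Ioc (0:ℝ) 1, x₁^2/x₂ =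
      ((1 - 2*(a y)*(1 - y))/(1 - 2*(a y)))^2 * ((1 - 4*(a y))/(1 - 4*(a y)*(1 - y))))
    (hda : HasDerivAt a a' x₃) :
    HasDerivAt (fun y => y*x₂/((1 - 2*(a y))^2*(1 - 4*(a y)*(1 - y))))
      (x₁^2/(1 - 2*(a x₃)*(1 - x₃))^2) x₃ ∧
    ∀ y ∈ Set.Ioc (0:ℝ) 1, x₁^2 ≤ x₁^2/(1 - 2*(a y)*(1 - y))^2 := by
  have hrel : ∀ y ∈ Ioc (0 : ℝ) 1, x₁ ^ 2 / x₂ * rootDen (a y) y = rootNum (a y) y :=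
    fun y hy => by
      rw [ha y hy, div_sq_mul_div_eq_rootNum_div_rootDen,
        div_mul_cancel₀ _ (rootDen_pos (haI y hy) (Ioc_subset_Icc_self hy)).ne']
  have hU : ∀ y ∈ Ioc (0 : ℝ) 1, 0 < 1 - 2 * a y * (1 - y) := fun y hy =>
    one_sub_mul_mul_pos (by norm_num) (haI y hy) (Ioc_subset_Icc_self hy)
  constructor
  · have hx₃ : x₃ ∈ Ioc 0 1 := ⟨hx3, hx3'.le⟩
    have hnear : ∀ᶠ y in 𝓝 x₃, y ∈ Ioc (0 : ℝ) 1 :=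
      mem_of_superset (Ioo_mem_nhds hx3 hx3') Ioo_subset_Ioc_self
    have hK := root_deriv_identity (Ioc_subset_Icc_self hx₃) hda
      (hnear.mono fun y hy => (haI y hy).1) (haI x₃ hx₃).2 (hnear.mono hrel)
    have hQ := rootDen_pos (haI x₃ hx₃) (Ioc_subset_Icc_self hx₃)
    refine (((hasDerivAt_id' x₃).mul_const x₂).div (hasDerivAt_rootDen hda) hQ.ne').congr_deriv ?_
    have hc : x₁ ^ 2 * rootDen (a x₃) x₃ = x₂ * rootNum (a x₃) x₃ := by
      rw [← hrel x₃ hx₃]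
      field_simp
    rw [div_eq_div_iff (pow_pos hQ 2).ne' (pow_pos (hU x₃ hx₃) 2).ne']
    simp only [rootDen, rootNum] at hc ⊢
    linear_combination (4 * x₂ * (1 - 2 * a x₃ * (1 - x₃)) ^ 2 * (1 - 2 * a x₃)) * hK
      - (1 - 2 * a x₃) ^ 2 * (1 - 4 * a x₃ * (1 - x₃)) * hc
  · intro y hy
    refine le_div_self (sq_nonneg x₁) (pow_pos (hU y hy) 2) (pow_le_one₀ (hU y hy).le ?_)
    exact sub_le_self 1 (mul_nonneg (mul_nonneg zero_le_two (haI y hy).1) (sub_nonneg.2 hy.2))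

/-- For m=0, M=1, the partial derivative ∂B/∂x₃ equals
x₁²/[1-2a(1-x₃)]² (with a the implicitly defined root of the cubic), and in particular
∂B/∂x₃ ≥ x₁² on the domain {x₁² ≤ x₂, 0 < x₃ ≤ 1}. -/
theorem stmt9 (x₁ x₂ x₃ a' : ℝ) (hx2 : 0 < x₂) (hx12 : x₁^2 ≤ x₂)
    (hx3 : 0 < x₃) (hx3' : x₃ < 1)
    (a : ℝ → ℝ)
    (haI : ∀ y ∈ Set.Ioc (0:ℝ) 1, a y ∈ Set.Ico (0:ℝ) (1/4))
    (ha : ∀ y ∈ Set.Ioc (0:ℝ) 1, x₁^2/x₂ =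
      ((1 - 2*(a y)*(1 - y))/(1 - 2*(a y)))^2 * ((1 - 4*(a y))/(1 - 4*(a y)*(1 - y))))
    (hda : HasDerivAt a a' x₃) :
    HasDerivAt (fun y => y*x₂/((1 - 2*(a y))^2*(1 - 4*(a y)*(1 - y))))
      (x₁^2/(1 - 2*(a x₃)*(1 - x₃))^2) x₃ ∧
    ∀ y ∈ Set.Ioc (0:ℝ) 1, x₁^2 ≤ x₁^2/(1 - 2*(a y)*(1 - y))^2 :=
  stmt9_general x₁ x₂ x₃ a' hx2 hx3 hx3' a haI ha hda
end

section
/- For m=0, M=1, the gradient of B is given by ∂B/∂x₁ = -x₁/(a[1-2a(1-x₃)]), ∂B/∂x₂ = 1/(2a(1-2a)), and ∂B/∂x₃ = x₁²/[1-2a(1-x₃)]², where a = a(x) is the implicit root of the cubic equation. -/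
/-!
Write `B(x) = Φ(x, a(x))` with `Φ(x, t) = -x₁² / (2t(1 - 2t(1 - x₃))) + x₂ / (2t(1 - 2t))`.
After clearing denominators, the equation defining `a(x)` says exactly that `∂Φ/∂t` vanishes at
`t = a(x)`. So in the chain rule the derivatives of `a` are multiplied by zero (envelope theorem),
and the gradient of `B` is the partial gradient of `Φ` in `x`, whatever the derivatives of `a` are.
-/

/-- The paper's `B(x)` is `bellman (x₁ ^ 2) x₂ (1 - x₃) (a x)`. -/
noncomputable def bellman (p q c t : ℝ) : ℝ :=
  -p / (2 * t * (1 - 2 * t * c)) + q / (2 * t * (1 - 2 * t))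

theorem hasDerivAt_bellman_comp {p q c t : ℝ → ℝ} {p' q' c' t' y : ℝ}
    (hp : HasDerivAt p p' y) (hq : HasDerivAt q q' y) (hc : HasDerivAt c c' y)
    (ht : HasDerivAt t t' y) (ht0 : t y ≠ 0) (hc1 : 1 - 2 * t y * c y ≠ 0)
    (h1 : 1 - 2 * t y ≠ 0) :
    HasDerivAt (fun y => bellman (p y) (q y) (c y) (t y))
      (-p' / (2 * t y * (1 - 2 * t y * c y)) + q' / (2 * t y * (1 - 2 * t y))
        - p y * c' / (1 - 2 * t y * c y) ^ 2
        + (p y * (1 - 4 * t y * c y) / (1 - 2 * t y * c y) ^ 2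
            - q y * (1 - 4 * t y) / (1 - 2 * t y) ^ 2) * t' / (2 * t y ^ 2)) y := by
  have h2t := ht.const_mul 2
  have hden₁ : HasDerivAt (fun y => 2 * t y * (1 - 2 * t y * c y))
      (2 * t' * (1 - 2 * t y * c y) + 2 * t y * -(2 * t' * c y + 2 * t y * c')) y :=
    h2t.mul ((h2t.mul hc).const_sub 1)
  have hden₂ : HasDerivAt (fun y => 2 * t y * (1 - 2 * t y))
      (2 * t' * (1 - 2 * t y) + 2 * t y * -(2 * t')) y :=
    h2t.mul (h2t.const_sub 1)
  refine (hp.neg.div hden₁ (by simp [*])).add (hq.div hden₂ (by simp [*])) |>.congr_deriv ?_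
  simp only [Pi.neg_apply]
  field_simp
  ring

theorem bellman_partial_t_eq_zero {p q c t : ℝ} (hc1 : 1 - 2 * t * c ≠ 0) (h1 : 1 - 2 * t ≠ 0)
    (hstat : p * (1 - 4 * t * c) * (1 - 2 * t) ^ 2 = q * (1 - 4 * t) * (1 - 2 * t * c) ^ 2) :
    p * (1 - 4 * t * c) / (1 - 2 * t * c) ^ 2 - q * (1 - 4 * t) / (1 - 2 * t) ^ 2 = 0 := by
  rw [sub_eq_zero, div_eq_div_iff (by positivity) (by positivity)]
  linear_combination hstat

theorem hasDerivAt_bellman_comp_of_stationary {p q c t : ℝ → ℝ} {p' q' c' t' y : ℝ}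
    (hp : HasDerivAt p p' y) (hq : HasDerivAt q q' y) (hc : HasDerivAt c c' y)
    (ht : HasDerivAt t t' y) (ht0 : t y ≠ 0) (hc1 : 1 - 2 * t y * c y ≠ 0)
    (h1 : 1 - 2 * t y ≠ 0)
    (hstat : p y * (1 - 4 * t y * c y) * (1 - 2 * t y) ^ 2
      = q y * (1 - 4 * t y) * (1 - 2 * t y * c y) ^ 2) :
    HasDerivAt (fun y => bellman (p y) (q y) (c y) (t y))
      (-p' / (2 * t y * (1 - 2 * t y * c y)) + q' / (2 * t y * (1 - 2 * t y))
        - p y * c' / (1 - 2 * t y * c y) ^ 2) y := by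
  simpa only [bellman_partial_t_eq_zero hc1 h1 hstat, zero_mul, zero_div, add_zero]
    using hasDerivAt_bellman_comp hp hq hc ht ht0 hc1 h1

theorem stationary_of_ratio_eq {p q c t : ℝ} (hq : q ≠ 0) (h1 : 1 - 2 * t ≠ 0)
    (h4c : 1 - 4 * t * c ≠ 0)
    (h : p / q = ((1 - 2 * t * c) / (1 - 2 * t)) ^ 2 * ((1 - 4 * t) / (1 - 4 * t * c))) :
    p * (1 - 4 * t * c) * (1 - 2 * t) ^ 2 = q * (1 - 4 * t) * (1 - 2 * t * c) ^ 2 := by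
  rw [div_pow, div_mul_div_comm, div_eq_div_iff hq (by positivity)] at h
  linear_combination h

/-- For m=0, M=1, the gradient of B is given by
∂B/∂x₁ = -x₁/(a[1-2a(1-x₃)]), ∂B/∂x₂ = 1/(2a(1-2a)), ∂B/∂x₃ = x₁²/[1-2a(1-x₃)]²,
where a = a(x) is the implicit root of the cubic equation. -/
theorem stmt10 (x₁ x₂ x₃ d₁ d₂ d₃ : ℝ)
    (hx1 : 0 < x₁^2) (hx12 : x₁^2 < x₂) (hx3 : 0 < x₃) (hx3' : x₃ < 1)
    (a : ℝ → ℝ → ℝ → ℝ)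
    (haI : ∀ y₁ y₂ y₃ : ℝ, 0 < y₁^2 → y₁^2 < y₂ → 0 < y₃ → y₃ ≤ 1 →
      a y₁ y₂ y₃ ∈ Set.Ioo (0:ℝ) (1/4))
    (ha : ∀ y₁ y₂ y₃ : ℝ, 0 < y₁^2 → y₁^2 < y₂ → 0 < y₃ → y₃ ≤ 1 →
      y₁^2/y₂ = ((1 - 2*(a y₁ y₂ y₃)*(1 - y₃))/(1 - 2*(a y₁ y₂ y₃)))^2 *
        ((1 - 4*(a y₁ y₂ y₃))/(1 - 4*(a y₁ y₂ y₃)*(1 - y₃))))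
    (hda1 : HasDerivAt (fun y => a y x₂ x₃) d₁ x₁)
    (hda2 : HasDerivAt (fun y => a x₁ y x₃) d₂ x₂)
    (hda3 : HasDerivAt (fun y => a x₁ x₂ y) d₃ x₃) :
    HasDerivAt (fun y => -y^2/(2*(a y x₂ x₃)*(1 - 2*(a y x₂ x₃)*(1 - x₃)))
        + x₂/(2*(a y x₂ x₃)*(1 - 2*(a y x₂ x₃))))
      (-x₁/((a x₁ x₂ x₃)*(1 - 2*(a x₁ x₂ x₃)*(1 - x₃)))) x₁ ∧
    HasDerivAt (fun y => -x₁^2/(2*(a x₁ y x₃)*(1 - 2*(a x₁ y x₃)*(1 - x₃)))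
        + y/(2*(a x₁ y x₃)*(1 - 2*(a x₁ y x₃))))
      (1/(2*(a x₁ x₂ x₃)*(1 - 2*(a x₁ x₂ x₃)))) x₂ ∧
    HasDerivAt (fun y => -x₁^2/(2*(a x₁ x₂ y)*(1 - 2*(a x₁ x₂ y)*(1 - y)))
        + x₂/(2*(a x₁ x₂ y)*(1 - 2*(a x₁ x₂ y))))
      (x₁^2/(1 - 2*(a x₁ x₂ x₃)*(1 - x₃))^2) x₃ := by
  obtain ⟨hA0, hA4⟩ := haI x₁ x₂ x₃ hx1 hx12 hx3 hx3'.le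
  have h4c : 0 < 1 - 4 * a x₁ x₂ x₃ * (1 - x₃) := by nlinarith
  have h2c : 0 < 1 - 2 * a x₁ x₂ x₃ * (1 - x₃) := by nlinarith
  have h2 : 0 < 1 - 2 * a x₁ x₂ x₃ := by linarith
  have hstat := stationary_of_ratio_eq (by linarith) h2.ne' h4c.ne'
    (ha x₁ x₂ x₃ hx1 hx12 hx3 hx3'.le)
  refine ⟨?_, ?_, ?_⟩
  · refine (hasDerivAt_bellman_comp_of_stationary (hasDerivAt_pow 2 x₁) (hasDerivAt_const x₁ x₂)
      (hasDerivAt_const x₁ (1 - x₃)) hda1 hA0.ne' h2c.ne' h2.ne' hstat).congr_deriv ?_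
    field_simp
    ring
  · refine (hasDerivAt_bellman_comp_of_stationary (hasDerivAt_const x₂ (x₁ ^ 2)) (hasDerivAt_id x₂)
      (hasDerivAt_const x₂ (1 - x₃)) hda2 hA0.ne' h2c.ne' h2.ne' hstat).congr_deriv ?_
    field_simp
    ring
  · refine (hasDerivAt_bellman_comp_of_stationary (hasDerivAt_const x₃ (x₁ ^ 2)) (hasDerivAt_const x₃ x₂)
      ((hasDerivAt_id' x₃).const_sub 1) hda3 hA0.ne' h2c.ne' h2.ne' hstat).congr_deriv ?_
    field_simp
    ring
end

section
/- Let f be a nonnegative finite superharmonic function on the dyadic tree (i.e., f(σ) ≥ (f(σ+) + f(σ-))/2 for every vertex σ). Let Δf(σ) = f(σ) - (f(σ+)+f(σ-))/2 ≥ 0 and define F(x) = liminf_{n→∞} f(σ_n(x)) along the branch determined by the binary expansion of x ∈ [0,1]. Then ∫₀¹ F(x) dx + Σ_{σ} 2^{-|σ|} Δf(σ) ≤ f(root). -/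
/-!
The level means `S n = 2⁻ⁿ ∑_{k < 2ⁿ} f n k` are the integrals over `(0,1)` of the step
functions `x ↦ f n ⌊2ⁿ x⌋₊`, and the weighted Laplacian summed over level `n` equals
`S n - S (n+1)`. Superharmonicity makes `S` decreasing, the Laplacian sum telescopes to
`f 0 0 - S N`, and Fatou's lemma bounds `∫ F` by every `S N`.
-/

open Filter MeasureTheory

open scoped ENNReal

theorem Finset.sum_range_two_mul {M : Type*} [AddCommMonoid M] (g : ℕ → M) (m : ℕ) :
    ∑ i ∈ Finset.range (2 * m), g i = ∑ k ∈ Finset.range m, (g (2 * k) + g (2 * k + 1)) := by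
  induction m with
  | zero => simp
  | succ m ih =>
    rw [Nat.mul_succ, Finset.sum_range_succ, Finset.sum_range_succ, ih, Finset.sum_range_succ,
      add_assoc]

theorem ENNReal.ofReal_liminf_le {ι : Type*} (l : Filter ι) (u : ι → ℝ) :
    ENNReal.ofReal (liminf u l) ≤ liminf (fun i => ENNReal.ofReal (u i)) l := by
  rcases eq_top_or_lt_top (liminf (fun i => ENNReal.ofReal (u i)) l) with h | h
  · exact h ▸ le_top
  refine ENNReal.ofReal_le_of_le_toReal (Real.sSup_le (fun a ha => ?_) ENNReal.toReal_nonneg)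
  rw [← ENNReal.ofReal_le_iff_le_toReal h.ne]
  exact le_liminf_of_le (by isBoundedDefault) (ha.mono fun i hi => ENNReal.ofReal_le_ofReal hi)

theorem MeasureTheory.integral_le_toReal_lintegral_ofReal {α : Type*} [MeasurableSpace α]
    {μ : Measure α} (f : α → ℝ) :
    ∫ a, f a ∂μ ≤ (∫⁻ a, ENNReal.ofReal (f a) ∂μ).toReal := by
  by_cases hf : Integrable f μ
  · rw [integral_eq_lintegral_pos_part_sub_lintegral_neg_part hf]
    exact sub_le_self _ ENNReal.toReal_nonneg
  · rw [integral_undef hf]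
    exact ENNReal.toReal_nonneg

theorem Nat.floor_mul_eq_iff_mem_Ico {c x : ℝ} (hc : 0 < c) (hx : 0 ≤ x) (k : ℕ) :
    ⌊c * x⌋₊ = k ↔ x ∈ Set.Ico (k / c) ((k + 1) / c) := by
  rw [Nat.floor_eq_iff (by positivity), Set.mem_Ico, div_le_iff₀ hc, lt_div_iff₀ hc, mul_comm x]

theorem lintegral_Ico_zero_one_natFloor_mul {N : ℕ} (hN : N ≠ 0) (g : ℕ → ℝ≥0∞) :
    ∫⁻ x in Set.Ico (0 : ℝ) 1, g ⌊(N : ℝ) * x⌋₊ = ∑ k ∈ Finset.range N, g k / N := by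
  have hN' : (0 : ℝ) < N := by positivity
  set I : ℕ → Set ℝ := fun k => Set.Ico (k / N) ((k + 1) / N)
  have floor_eq : ∀ k, ∀ x ∈ I k, ⌊(N : ℝ) * x⌋₊ = k := fun k x hx =>
    (Nat.floor_mul_eq_iff_mem_Ico hN' ((by positivity : (0 : ℝ) ≤ k / N).trans hx.1) k).2 hx
  have cover : Set.Ico (0 : ℝ) 1 = ⋃ k ∈ Finset.range N, I k := by
    ext x
    simp only [Set.mem_iUnion, Finset.mem_range, exists_prop]
    constructor
    · rintro ⟨hx0, hx1⟩
      refine ⟨⌊(N : ℝ) * x⌋₊, (Nat.floor_lt (by positivity)).2 (by nlinarith), ?_⟩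
      exact (Nat.floor_mul_eq_iff_mem_Ico hN' hx0 _).1 rfl
    · rintro ⟨k, hk, hxk⟩
      have hk' : (k : ℝ) + 1 ≤ N := by exact_mod_cast hk
      exact ⟨(by positivity : (0 : ℝ) ≤ k / N).trans hxk.1,
        hxk.2.trans_le ((div_le_one hN').2 hk')⟩
  have disjoint : Set.PairwiseDisjoint ↑(Finset.range N) I := fun i _ j _ hij =>
    Set.disjoint_left.2 fun x hi hj => hij ((floor_eq i x hi).symm.trans (floor_eq j x hj))
  rw [cover, lintegral_biUnion_finset disjoint fun k _ => measurableSet_Ico]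
  refine Finset.sum_congr rfl fun k _ => ?_
  rw [setLIntegral_congr_fun measurableSet_Ico fun x hx => by rw [floor_eq k x hx],
    setLIntegral_const, Real.volume_Ico, ← sub_div, add_sub_cancel_left, one_div,
    ENNReal.ofReal_inv_of_pos hN', ENNReal.ofReal_natCast, div_eq_mul_inv]

namespace DyadicTree

variable (f : ℕ → ℕ → ℝ)

noncomputable def laplacian (n k : ℕ) : ℝ :=
  f n k - (f (n + 1) (2 * k) + f (n + 1) (2 * k + 1)) / 2

noncomputable def levelMean (n : ℕ) : ℝ :=
  ∑ k ∈ Finset.range (2 ^ n), ((2 : ℝ) ^ n)⁻¹ * f n k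

def Superharmonic : Prop :=
  ∀ n k, k < 2 ^ n → (f (n + 1) (2 * k) + f (n + 1) (2 * k + 1)) / 2 ≤ f n k

theorem levelMean_zero : levelMean f 0 = f 0 0 := by
  simp [levelMean]

theorem levelMean_sub_levelMean_succ (n : ℕ) :
    levelMean f n - levelMean f (n + 1) = levelMean (laplacian f) n := by
  rw [levelMean, levelMean, levelMean, pow_succ', Finset.sum_range_two_mul,
    ← Finset.sum_sub_distrib]
  refine Finset.sum_congr rfl fun k _ => ?_
  rw [laplacian, pow_succ']
  field_simp

theorem sum_range_levelMean_laplacian (N : ℕ) :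
    ∑ n ∈ Finset.range N, levelMean (laplacian f) n = f 0 0 - levelMean f N := by
  simp_rw [← levelMean_sub_levelMean_succ, Finset.sum_range_sub', levelMean_zero]

variable {f}

theorem levelMean_nonneg (hnonneg : ∀ n k, k < 2 ^ n → 0 ≤ f n k) (n : ℕ) : 0 ≤ levelMean f n :=
  Finset.sum_nonneg fun k hk => mul_nonneg (by positivity) (hnonneg n k (Finset.mem_range.1 hk))

theorem laplacian_nonneg (hsuper : Superharmonic f) :
    ∀ n k, k < 2 ^ n → 0 ≤ laplacian f n k :=
  fun n k hk => sub_nonneg.2 (hsuper n k hk)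

theorem levelMean_antitone (hsuper : Superharmonic f) : Antitone (levelMean f) :=
  antitone_nat_of_succ_le fun n => sub_nonneg.1 <|
    (levelMean_sub_levelMean_succ f n).symm ▸ levelMean_nonneg (laplacian_nonneg hsuper) n

theorem lintegral_ofReal_branch_eq_levelMean (hnonneg : ∀ n k, k < 2 ^ n → 0 ≤ f n k) (n : ℕ) :
    ∫⁻ x in Set.Ioo (0 : ℝ) 1, ENNReal.ofReal (f n ⌊(2 : ℝ) ^ n * x⌋₊)
      = ENNReal.ofReal (levelMean f n) := by
  have h := lintegral_Ico_zero_one_natFloor_mul (N := 2 ^ n) (by positivity)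
    fun k => ENNReal.ofReal (f n k)
  push_cast at h
  rw [setLIntegral_congr Ioo_ae_eq_Ico, h, levelMean, ENNReal.ofReal_sum_of_nonneg fun k hk =>
    mul_nonneg (by positivity) (hnonneg n k (Finset.mem_range.1 hk))]
  refine Finset.sum_congr rfl fun k _ => ?_
  rw [ENNReal.ofReal_mul (by positivity), ENNReal.ofReal_inv_of_pos (by positivity),
    ENNReal.ofReal_pow zero_le_two, ENNReal.ofReal_ofNat, mul_comm, div_eq_mul_inv]

theorem integral_liminf_branch_le_levelMean (hnonneg : ∀ n k, k < 2 ^ n → 0 ≤ f n k)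
    (hsuper : Superharmonic f) (N : ℕ) :
    ∫ x in Set.Ioo (0 : ℝ) 1, liminf (fun n => f n ⌊(2 : ℝ) ^ n * x⌋₊) atTop
      ≤ levelMean f N := by
  have fatou : ∫⁻ x in Set.Ioo (0 : ℝ) 1,
      ENNReal.ofReal (liminf (fun n => f n ⌊(2 : ℝ) ^ n * x⌋₊) atTop)
        ≤ ENNReal.ofReal (levelMean f N) :=
    calc _ ≤ ∫⁻ x in Set.Ioo (0 : ℝ) 1,
            liminf (fun n => ENNReal.ofReal (f n ⌊(2 : ℝ) ^ n * x⌋₊)) atTop :=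
          lintegral_mono fun x => ENNReal.ofReal_liminf_le _ _
      _ ≤ liminf (fun n => ∫⁻ x in Set.Ioo (0 : ℝ) 1,
            ENNReal.ofReal (f n ⌊(2 : ℝ) ^ n * x⌋₊)) atTop :=
          lintegral_liminf_le fun n => ((measurable_from_nat (f := f n)).comp
            (measurable_id.const_mul _).nat_floor).ennreal_ofReal
      _ = liminf (fun n => ENNReal.ofReal (levelMean f n)) atTop := by
          simp only [lintegral_ofReal_branch_eq_levelMean hnonneg]
      _ ≤ ENNReal.ofReal (levelMean f N) :=
          liminf_le_of_frequently_le' <| (eventually_ge_atTop N).frequently.mono fun n hn =>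
            ENNReal.ofReal_le_ofReal (levelMean_antitone hsuper hn)
  calc _ ≤ _ := integral_le_toReal_lintegral_ofReal _
    _ ≤ (ENNReal.ofReal (levelMean f N)).toReal := ENNReal.toReal_mono ENNReal.ofReal_ne_top fatou
    _ = levelMean f N := ENNReal.toReal_ofReal (levelMean_nonneg hnonneg N)

end DyadicTree

/-- Green's formula on the dyadic tree. Vertices at level n are indexed by
k < 2ⁿ (the dyadic intervals), the children of (n,k) being (n+1,2k) and (n+1,2k+1).
If f is a nonnegative superharmonic function on the tree, Δf its discrete Laplacian and
F(x) the liminf of f along the branch of x ∈ [0,1], then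
∫₀¹ F + Σ_σ 2^{-|σ|} Δf(σ) ≤ f(root). -/
theorem stmt13 (f : ℕ → ℕ → ℝ)
    (hnonneg : ∀ n k, k < 2^n → 0 ≤ f n k)
    (hsuper : ∀ n k, k < 2^n → (f (n+1) (2*k) + f (n+1) (2*k+1))/2 ≤ f n k) :
    (∫ x in Set.Ioo (0:ℝ) 1,
        Filter.liminf (fun n : ℕ => f n ⌊(2:ℝ)^n * x⌋₊) Filter.atTop)
      + ∑' n : ℕ, ∑ k ∈ Finset.range (2^n),
          ((2:ℝ)^n)⁻¹ * (f n k - (f (n+1) (2*k) + f (n+1) (2*k+1))/2)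
      ≤ f 0 0 := by
  change _ + ∑' n, DyadicTree.levelMean (DyadicTree.laplacian f) n ≤ f 0 0
  rw [← le_sub_iff_add_le']
  refine Real.tsum_le_of_sum_range_le
    (DyadicTree.levelMean_nonneg (DyadicTree.laplacian_nonneg hsuper)) fun N => ?_
  rw [DyadicTree.sum_range_levelMean_laplacian]
  linarith [DyadicTree.integral_liminf_branch_le_levelMean hnonneg hsuper N]
end

section
/- For m=0, M=1, the extremal line L_{t₁,t₂} given parametrically by x₁ = ξ₁(1-2a(1-x₃))/(1-2a), x₂ = ξ₁²(1-4a(1-x₃))/(1-4a) (x₃ ∈ [0,1]) has the property that its projection onto the plane {x₃=1} is tangent at the point (u₁,u₂) = (ξ₁/(1-2a), ξ₁²/(1-4a)) to the parabola v₂ = A v₁² with A = (1-2a)²/(1-4a). -/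
/-!
Both coordinates of the extremal line are affine rescalings of the endpoint `u`:
with `s = 2a(1 - x₃)` one has `x₁ = (1 - s) u₁` and `x₂ = (1 - 2s) u₂`, so the projected line
has direction `(u₁, 2u₂)`. Since `u₂ = A u₁²`, its slope `2u₂/u₁ = 2Au₁` is that of the parabola.
-/

variable {K : Type*} [Field K]

theorem sq_div_eq_sq_div_mul_div_sq (ξ c d : K) (hc : c ≠ 0) :
    ξ ^ 2 / d = c ^ 2 / d * (ξ / c) ^ 2 := by
  field_simp

theorem parabola_tangent_of_scaled_displacement (A u₁ u₂ s : K) (hu : u₂ = A * u₁ ^ 2) :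
    (1 - 2 * s) * u₂ - u₂ = 2 * A * u₁ * ((1 - s) * u₁ - u₁) := by
  rw [hu]; ring

theorem stmt15_general (a ξ₁ : ℝ) (ha' : a < 1/4) :
    ξ₁^2/(1 - 4*a) = ((1 - 2*a)^2/(1 - 4*a)) * (ξ₁/(1 - 2*a))^2 ∧
    ∀ t : ℝ,
      ξ₁^2*(1 - 4*a*(1 - t))/(1 - 4*a) - ξ₁^2/(1 - 4*a)
        = (2*((1 - 2*a)^2/(1 - 4*a))*(ξ₁/(1 - 2*a))) *
          (ξ₁*(1 - 2*a*(1 - t))/(1 - 2*a) - ξ₁/(1 - 2*a)) := by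
  have hu := sq_div_eq_sq_div_mul_div_sq ξ₁ (1 - 2*a) (1 - 4*a) (by linarith)
  refine ⟨hu, fun t => ?_⟩
  convert parabola_tangent_of_scaled_displacement _ _ _ (2*a*(1 - t)) hu using 2 <;> ring

/-- For m=0, M=1, the extremal line
x₁(t) = ξ₁(1-2a(1-t))/(1-2a), x₂(t) = ξ₁²(1-4a(1-t))/(1-4a) projects onto the plane
{x₃=1} to the tangent line at (u₁,u₂) = (ξ₁/(1-2a), ξ₁²/(1-4a)) of the parabola
v₂ = A v₁² with A = (1-2a)²/(1-4a). -/
theorem stmt15 (a ξ₁ : ℝ) (ha : 0 < a) (ha' : a < 1/4) (hξ : ξ₁ ≠ 0) :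
    ξ₁^2/(1 - 4*a) = ((1 - 2*a)^2/(1 - 4*a)) * (ξ₁/(1 - 2*a))^2 ∧
    ∀ t : ℝ,
      ξ₁^2*(1 - 4*a*(1 - t))/(1 - 4*a) - ξ₁^2/(1 - 4*a)
        = (2*((1 - 2*a)^2/(1 - 4*a))*(ξ₁/(1 - 2*a))) *
          (ξ₁*(1 - 2*a*(1 - t))/(1 - 2*a) - ξ₁/(1 - 2*a)) :=
  stmt15_general a ξ₁ ha'
end

section
/- For 1 < p < ∞ with conjugate exponent q = p/(p-1), fixed m < M and x₃ ∈ (m, M], the function s(a) = |(a - q(M-x₃)|a|^p)/(a - q(M-m)|a|^p)|^p · (a - pq(M-m)|a|^p)/(a - pq(M-x₃)|a|^p) is strictly decreasing from 1 to 0 on the interval (0, (1/(pq(M-m)))^{q-1}), so for each σ ∈ (0,1) the equation s(a) = σ has a unique solution there. -/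
open Filter Set Topology

/-!
Dividing numerator and denominator of each fraction by `a` shows that `s a = g (a ^ (p - 1))`
for `g = ratioProfile p c d`, `c = q (M - m)`, `d = q (M - x₃)`, so that `0 ≤ d < c`.
The logarithmic derivative of `g` is
`p (p - 1) t (d² / ((1 - d t)(1 - p d t)) - c² / ((1 - c t)(1 - p c t)))`, which is negative on
`(0, 1 / (p c))` because the second quotient has the larger numerator and the smaller denominator.
Moreover `g 0 = 1`, `g (1 / (p c)) = 0` and `g` is continuous on `[0, 1 / (p c)]`. Since
`a ↦ a ^ (p - 1)` maps `(0, (1 / (p c)) ^ (q - 1))` increasingly onto `(0, 1 / (p c))`, the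
intermediate value theorem for `g` gives the solutions of `s a = σ`.
-/

noncomputable def ratioProfile (p c d t : ℝ) : ℝ :=
  |(1 - d * t) / (1 - c * t)| ^ p * ((1 - p * c * t) / (1 - p * d * t))

noncomputable def logRatioProfile (p c d t : ℝ) : ℝ :=
  p * (Real.log (1 - d * t) - Real.log (1 - c * t)) + Real.log (1 - p * c * t)
    - Real.log (1 - p * d * t)

section

variable {p c d t : ℝ}

lemma ratioProfile_zero : ratioProfile p c d 0 = 1 := by
  simp [ratioProfile]

lemma ratioProfile_one_div_mul (hpc : p * c ≠ 0) : ratioProfile p c d (1 / (p * c)) = 0 := by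
  rw [ratioProfile, mul_one_div_cancel hpc, sub_self, zero_div, mul_zero]

lemma ratioProfile_continuousAt (hp : 0 ≤ p) (hc : 1 - c * t ≠ 0) (hd : 1 - p * d * t ≠ 0) :
    ContinuousAt (ratioProfile p c d) t := by
  unfold ratioProfile
  fun_prop (disch := assumption)

lemma ratioProfile_factors_pos_of_mem_Icc (hp : 1 < p) (hd : 0 ≤ d) (hdc : d < c)
    (ht : t ∈ Icc 0 (1 / (p * c))) : 0 < 1 - d * t ∧ 0 < 1 - c * t ∧ 0 < 1 - p * d * t := by
  obtain ⟨ht, htc⟩ := ht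
  rw [le_div_iff₀ (mul_pos (by linarith) (hd.trans_lt hdc))] at htc
  have hct : 0 < 1 - c * t := by
    nlinarith [mul_nonneg (sub_nonneg.2 hp.le) (mul_nonneg (hd.trans hdc.le) ht)]
  refine ⟨by nlinarith [mul_nonneg (sub_nonneg.2 hdc.le) ht], hct, ?_⟩
  nlinarith [mul_nonneg hd (sub_nonneg.2 htc)]

lemma ratioProfile_factors_pos_of_mem_Ioo (hp : 1 < p) (hd : 0 ≤ d) (hdc : d < c)
    (ht : t ∈ Ioo 0 (1 / (p * c))) :
    0 < 1 - d * t ∧ 0 < 1 - c * t ∧ 0 < 1 - p * c * t ∧ 0 < 1 - p * d * t := by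
  obtain ⟨hdt, hct, hpdt⟩ := ratioProfile_factors_pos_of_mem_Icc hp hd hdc (Ioo_subset_Icc_self ht)
  have hpct := (lt_div_iff₀ (mul_pos (by linarith) (hd.trans_lt hdc))).1 ht.2
  exact ⟨hdt, hct, by linarith, hpdt⟩

lemma ratioProfile_continuousOn (hp : 1 < p) (hd : 0 ≤ d) (hdc : d < c) :
    ContinuousOn (ratioProfile p c d) (Icc 0 (1 / (p * c))) := fun t ht =>
  have ⟨_, hct, hpdt⟩ := ratioProfile_factors_pos_of_mem_Icc hp hd hdc ht
  (ratioProfile_continuousAt (by linarith) hct.ne' hpdt.ne').continuousWithinAt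

lemma hasDerivAt_log_one_sub_mul (k : ℝ) (h : 0 < 1 - k * t) :
    HasDerivAt (fun x => Real.log (1 - k * x)) (-k / (1 - k * t)) t := by
  simpa using (((hasDerivAt_id t).const_mul k).const_sub 1).log h.ne'

lemma hasDerivAt_logRatioProfile (hd : 0 < 1 - d * t) (hc : 0 < 1 - c * t)
    (hpc : 0 < 1 - p * c * t) (hpd : 0 < 1 - p * d * t) :
    HasDerivAt (logRatioProfile p c d)
      (p * (p - 1) * t * (d ^ 2 / ((1 - d * t) * (1 - p * d * t))
        - c ^ 2 / ((1 - c * t) * (1 - p * c * t)))) t := by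
  have h := (((hasDerivAt_log_one_sub_mul d hd).sub (hasDerivAt_log_one_sub_mul c hc)).const_mul p
    |>.add (hasDerivAt_log_one_sub_mul (p * c) hpc)).sub (hasDerivAt_log_one_sub_mul (p * d) hpd)
  refine h.congr_deriv ?_
  -- `field_simp` looks for the denominators in these normal forms
  have hc' : 1 - t * c ≠ 0 := by rw [mul_comm]; exact hc.ne'
  have hpc' : 1 - p * t * c ≠ 0 := by rw [mul_right_comm]; exact hpc.ne'
  field_simp [hd.ne', hpd.ne']
  ring

lemma ratioProfile_pos (hd : 0 < 1 - d * t) (hc : 0 < 1 - c * t)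
    (hpc : 0 < 1 - p * c * t) (hpd : 0 < 1 - p * d * t) : 0 < ratioProfile p c d t :=
  mul_pos (Real.rpow_pos_of_pos (abs_pos.2 (div_pos hd hc).ne') p) (div_pos hpc hpd)

lemma log_ratioProfile (hd : 0 < 1 - d * t) (hc : 0 < 1 - c * t)
    (hpc : 0 < 1 - p * c * t) (hpd : 0 < 1 - p * d * t) :
    Real.log (ratioProfile p c d t) = logRatioProfile p c d t := by
  rw [ratioProfile, Real.log_mul (Real.rpow_pos_of_pos (abs_pos.2 (div_pos hd hc).ne') p).ne'
    (div_pos hpc hpd).ne', Real.log_rpow (abs_pos.2 (div_pos hd hc).ne'), Real.log_abs,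
    Real.log_div hd.ne' hc.ne', Real.log_div hpc.ne' hpd.ne', logRatioProfile]
  ring

lemma sq_div_lt_sq_div (hp : 1 < p) (hd : 0 ≤ d) (hdc : d < c) (ht : 0 < t)
    (hpc : 0 < 1 - p * c * t) :
    d ^ 2 / ((1 - d * t) * (1 - p * d * t)) < c ^ 2 / ((1 - c * t) * (1 - p * c * t)) := by
  have hct : 0 < 1 - c * t := by nlinarith [mul_pos (sub_pos.2 hp) (mul_pos (hd.trans_lt hdc) ht)]
  refine div_lt_div₀ (pow_lt_pow_left₀ hdc hd two_ne_zero) ?_ (sq_nonneg c) (mul_pos hct hpc)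
  have hp0 : 0 < p := by linarith
  exact mul_le_mul (by nlinarith) (by nlinarith [mul_le_mul_of_nonneg_left hdc.le hp0.le]) hpc.le
    (by nlinarith)

lemma logRatioProfile_strictAntiOn (hp : 1 < p) (hd : 0 ≤ d) (hdc : d < c) :
    StrictAntiOn (logRatioProfile p c d) (Ioo 0 (1 / (p * c))) := by
  have hderiv : ∀ t ∈ Ioo 0 (1 / (p * c)), HasDerivAt (logRatioProfile p c d)
      (p * (p - 1) * t * (d ^ 2 / ((1 - d * t) * (1 - p * d * t))
        - c ^ 2 / ((1 - c * t) * (1 - p * c * t)))) t := fun t ht => by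
    obtain ⟨hdt, hct, hpct, hpdt⟩ := ratioProfile_factors_pos_of_mem_Ioo hp hd hdc ht
    exact hasDerivAt_logRatioProfile hdt hct hpct hpdt
  refine strictAntiOn_of_hasDerivWithinAt_neg (convex_Ioo _ _) (f' := fun t => p * (p - 1) * t *
      (d ^ 2 / ((1 - d * t) * (1 - p * d * t)) - c ^ 2 / ((1 - c * t) * (1 - p * c * t))))
    (fun t ht => (hderiv t ht).continuousAt.continuousWithinAt) (fun t ht => ?_) (fun t ht => ?_)
  · rw [interior_Ioo] at ht
    exact (hderiv t ht).hasDerivWithinAt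
  · rw [interior_Ioo] at ht
    refine mul_neg_of_pos_of_neg (mul_pos (mul_pos (by linarith) (by linarith)) ht.1) (sub_neg.2 ?_)
    exact sq_div_lt_sq_div hp hd hdc ht.1 (ratioProfile_factors_pos_of_mem_Ioo hp hd hdc ht).2.2.1

lemma ratioProfile_strictAntiOn (hp : 1 < p) (hd : 0 ≤ d) (hdc : d < c) :
    StrictAntiOn (ratioProfile p c d) (Ioo 0 (1 / (p * c))) := by
  intro t₁ ht₁ t₂ ht₂ h
  obtain ⟨hd₁, hc₁, hpc₁, hpd₁⟩ := ratioProfile_factors_pos_of_mem_Ioo hp hd hdc ht₁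
  obtain ⟨hd₂, hc₂, hpc₂, hpd₂⟩ := ratioProfile_factors_pos_of_mem_Ioo hp hd hdc ht₂
  rw [← Real.log_lt_log_iff (ratioProfile_pos hd₂ hc₂ hpc₂ hpd₂)
    (ratioProfile_pos hd₁ hc₁ hpc₁ hpd₁), log_ratioProfile hd₁ hc₁ hpc₁ hpd₁,
    log_ratioProfile hd₂ hc₂ hpc₂ hpd₂]
  exact logRatioProfile_strictAntiOn hp hd hdc ht₁ ht₂ h

end

lemma ratioProfile_rpow_sub_one {a : ℝ} (p c d : ℝ) (ha : 0 < a) :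
    ratioProfile p c d (a ^ (p - 1)) =
      |(a - d * |a| ^ p) / (a - c * |a| ^ p)| ^ p *
        ((a - p * c * |a| ^ p) / (a - p * d * |a| ^ p)) := by
  have hpow : |a| ^ p = a * a ^ (p - 1) := by
    rw [abs_of_pos ha, Real.rpow_sub_one ha.ne', mul_div_cancel₀ _ ha.ne']
  have hfactor : ∀ k : ℝ, a - k * |a| ^ p = a * (1 - k * a ^ (p - 1)) := fun k => by
    rw [hpow]; ring
  rw [hfactor, hfactor, hfactor, hfactor, mul_div_mul_left _ _ ha.ne',
    mul_div_mul_left _ _ ha.ne', ratioProfile]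

theorem strictAntiOn_tendsto_existsUnique_of_eq_comp_rpow {g s : ℝ → ℝ} {r B : ℝ} (hr : 0 < r)
    (hB : 0 < B) (hs : ∀ a, 0 < a → s a = g (a ^ r)) (hanti : StrictAntiOn g (Ioo 0 B))
    (hcont : ContinuousOn g (Icc 0 B)) (hg0 : g 0 = 1) (hgB : g B = 0) :
    StrictAntiOn s (Ioo 0 (B ^ r⁻¹)) ∧ Tendsto s (𝓝[>] 0) (𝓝 1) ∧
      Tendsto s (𝓝[<] (B ^ r⁻¹)) (𝓝 0) ∧
      ∀ σ ∈ Ioo (0 : ℝ) 1, ∃! a : ℝ, a ∈ Ioo 0 (B ^ r⁻¹) ∧ s a = σ := by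
  have hA : 0 < B ^ r⁻¹ := Real.rpow_pos_of_pos hB _
  have hAr : (B ^ r⁻¹) ^ r = B := Real.rpow_inv_rpow hB.le hr.ne'
  have hmaps : MapsTo (· ^ r) (Ioo 0 (B ^ r⁻¹)) (Ioo 0 B) := fun a ha =>
    ⟨Real.rpow_pos_of_pos ha.1 r, (Real.lt_rpow_inv_iff_of_pos ha.1.le hB.le hr).1 ha.2⟩
  have hsanti : StrictAntiOn s (Ioo 0 (B ^ r⁻¹)) := fun a₁ h₁ a₂ h₂ h => by
    rw [hs a₁ h₁.1, hs a₂ h₂.1]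
    exact hanti (hmaps h₁) (hmaps h₂) (Real.rpow_lt_rpow h₁.1.le h hr)
  have hlim : ∀ a₀ ∈ Icc 0 (B ^ r⁻¹), ∀ l ≤ 𝓝 a₀, Ioo 0 (B ^ r⁻¹) ∈ l →
      Tendsto s l (𝓝 (g (a₀ ^ r))) := fun a₀ ha₀ l hl hmem => by
    have hpow : Tendsto (· ^ r) l (𝓝[Icc 0 B] (a₀ ^ r)) :=
      tendsto_nhdsWithin_iff.2 ⟨((Real.continuousAt_rpow_const a₀ r (Or.inr hr.le)).mono_left hl),
        mem_of_superset hmem fun a ha => Ioo_subset_Icc_self (hmaps ha)⟩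
    refine ((hcont _ ?_).tendsto.comp hpow).congr' ?_
    · exact ⟨Real.rpow_nonneg ha₀.1 r, hAr ▸ Real.rpow_le_rpow ha₀.1 ha₀.2 hr.le⟩
    · filter_upwards [hmem] with a ha using (hs a ha.1).symm
  refine ⟨hsanti, ?_, ?_, ?_⟩
  · simpa [Real.zero_rpow hr.ne', hg0] using
      hlim 0 ⟨le_rfl, hA.le⟩ _ nhdsWithin_le_nhds (Ioo_mem_nhdsGT hA)
  · simpa [hAr, hgB] using
      hlim _ ⟨hA.le, le_rfl⟩ _ nhdsWithin_le_nhds (Ioo_mem_nhdsLT hA)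
  · rintro σ hσ
    obtain ⟨t, ht, rfl⟩ := intermediate_value_Ioo' hB.le hcont (by rwa [hg0, hgB])
    have hmem : t ^ r⁻¹ ∈ Ioo 0 (B ^ r⁻¹) :=
      ⟨Real.rpow_pos_of_pos ht.1 _, Real.rpow_lt_rpow ht.1.le ht.2 (inv_pos.2 hr)⟩
    have hst : s (t ^ r⁻¹) = g t := by rw [hs _ hmem.1, Real.rpow_inv_rpow ht.1.le hr.ne']
    exact ⟨_, ⟨hmem, hst⟩, fun a ⟨ha, hsa⟩ => hsanti.injOn ha hmem (hsa.trans hst.symm)⟩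

theorem stmt18_general (p q m M x₃ : ℝ) (hp : 1 < p) (hq : q = p/(p - 1))
    (hx₃m : m < x₃) (hx₃M : x₃ ≤ M)
    (s : ℝ → ℝ)
    (hs : ∀ a : ℝ, s a =
      |(a - q*(M - x₃)*|a|^p) / (a - q*(M - m)*|a|^p)|^p *
      ((a - p*q*(M - m)*|a|^p) / (a - p*q*(M - x₃)*|a|^p))) :
    StrictAntiOn s (Set.Ioo 0 ((1/(p*q*(M - m)))^(q - 1))) ∧
    Tendsto s (nhdsWithin 0 (Set.Ioi 0)) (nhds 1) ∧
    Tendsto s (nhdsWithin ((1/(p*q*(M - m)))^(q - 1))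
      (Set.Iio ((1/(p*q*(M - m)))^(q - 1)))) (nhds 0) ∧
    ∀ σ ∈ Set.Ioo (0:ℝ) 1,
      ∃! a : ℝ, a ∈ Set.Ioo 0 ((1/(p*q*(M - m)))^(q - 1)) ∧ s a = σ := by
  have hp1 : 0 < p - 1 := sub_pos.2 hp
  have hq0 : 0 < q := hq ▸ div_pos (by linarith) hp1
  have hq1 : q - 1 = (p - 1)⁻¹ := by rw [hq]; field_simp; ring
  set c := q * (M - m)
  set d := q * (M - x₃)
  have hd : 0 ≤ d := mul_nonneg hq0.le (sub_nonneg.2 hx₃M)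
  have hdc : d < c := mul_lt_mul_of_pos_left (by linarith) hq0
  have hpc : 0 < p * c := mul_pos (by linarith) (hd.trans_lt hdc)
  rw [hq1, show p * q * (M - m) = p * c by ring]
  refine strictAntiOn_tendsto_existsUnique_of_eq_comp_rpow hp1 (one_div_pos.2 hpc)
    (fun a ha => ?_) (ratioProfile_strictAntiOn hp hd hdc) (ratioProfile_continuousOn hp hd hdc)
    ratioProfile_zero (ratioProfile_one_div_mul hpc.ne')
  rw [hs, ratioProfile_rpow_sub_one p c d ha, mul_assoc p q, mul_assoc p q]

/-- For 1 < p < ∞ with q = p/(p-1), m < M and x₃ ∈ (m, M], the function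
s(a) = |(a - q(M-x₃)|a|^p)/(a - q(M-m)|a|^p)|^p · (a - pq(M-m)|a|^p)/(a - pq(M-x₃)|a|^p)
is strictly decreasing from 1 to 0 on (0, (1/(pq(M-m)))^{q-1}); hence for each
σ ∈ (0,1) the equation s(a) = σ has a unique solution there. -/
theorem stmt18 (p q m M x₃ : ℝ) (hp : 1 < p) (hq : q = p/(p - 1))
    (hmM : m < M) (hx₃m : m < x₃) (hx₃M : x₃ ≤ M)
    (s : ℝ → ℝ)
    (hs : ∀ a : ℝ, s a =
      |(a - q*(M - x₃)*|a|^p) / (a - q*(M - m)*|a|^p)|^p *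
      ((a - p*q*(M - m)*|a|^p) / (a - p*q*(M - x₃)*|a|^p))) :
    StrictAntiOn s (Set.Ioo 0 ((1/(p*q*(M - m)))^(q - 1))) ∧
    Tendsto s (nhdsWithin 0 (Set.Ioi 0)) (nhds 1) ∧
    Tendsto s (nhdsWithin ((1/(p*q*(M - m)))^(q - 1))
      (Set.Iio ((1/(p*q*(M - m)))^(q - 1)))) (nhds 0) ∧
    ∀ σ ∈ Set.Ioo (0:ℝ) 1,
      ∃! a : ℝ, a ∈ Set.Ioo 0 ((1/(p*q*(M - m)))^(q - 1)) ∧ s a = σ :=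
  stmt18_general p q m M x₃ hp hq hx₃m hx₃M s hs
end

section
/- Let B(x₁,x₂) = ((1-√(δ²-(x₂-x₁²)))/(1-δ)) · e^{x₁+√(δ²-(x₂-x₁²))-δ} for 0 < δ < 1. Then B satisfies the degenerate Monge–Ampère equation B_{x₁x₁}B_{x₂x₂} - B_{x₁x₂}² = 0 on the interior of the parabolic strip {(x₁,x₂) : x₁² < x₂ < x₁² + δ²}, together with the boundary condition B(x₁, x₁²) = e^{x₁} and the homogeneity B(x₁+t, x₂+2x₁t+t²) = e^t B(x₁,x₂). -/
/-!
Put `s = √(δ² - (x₂ - x₁²))` and `a = x₁ + s`. The level sets `a = const` are the tangents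
`x₂ = 2 a x₁ + δ² - a²` to the upper parabola `x₂ = x₁² + δ²`, and along each of them `B` is affine:
both first partials are functions of `a` alone, `B₁ = (1 - a) e^{a-δ}/(1-δ)` and
`B₂ = e^{a-δ}/(2(1-δ))`. Hence each row of the Hessian is a multiple of `(a₁, a₂)`, so its
determinant vanishes. The boundary condition is `s = δ` on `x₂ = x₁²`, and the homogeneity holds
because the shift leaves `x₂ - x₁²`, hence `s`, unchanged.
-/

open Real Filter Topology

noncomputable section

def stripRoot (δ x₁ x₂ : ℝ) : ℝ := √(δ ^ 2 - (x₂ - x₁ ^ 2))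

def tangentAbscissa (δ x₁ x₂ : ℝ) : ℝ := x₁ + stripRoot δ x₁ x₂

def expBellman (δ x₁ x₂ : ℝ) : ℝ :=
  (1 - stripRoot δ x₁ x₂) / (1 - δ) * exp (tangentAbscissa δ x₁ x₂ - δ)

def expBellmanDerivFst (δ a : ℝ) : ℝ := (1 - a) / (1 - δ) * exp (a - δ)

def expBellmanDerivSnd (δ a : ℝ) : ℝ := exp (a - δ) / (1 - δ) / 2

end

theorem deriv_deriv_eq_of_eventually_hasDerivAt {𝕜 F : Type*} [NontriviallyNormedField 𝕜]
    [NormedAddCommGroup F] [NormedSpace 𝕜 F] {f g : 𝕜 → F} {x : 𝕜} {g' : F}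
    (hf : ∀ᶠ y in 𝓝 x, HasDerivAt f (g y) y) (hg : HasDerivAt g g' x) :
    deriv (deriv f) x = g' :=
  (hg.congr_of_eventuallyEq (hf.mono fun _ hy => hy.deriv)).deriv

section Derivatives

variable {δ x₁ x₂ : ℝ}

theorem stripRoot_ne_zero (h : 0 < δ ^ 2 - (x₂ - x₁ ^ 2)) : stripRoot δ x₁ x₂ ≠ 0 :=
  (Real.sqrt_pos.2 h).ne'

theorem hasDerivAt_stripRoot_fst (h : 0 < δ ^ 2 - (x₂ - x₁ ^ 2)) :
    HasDerivAt (fun y => stripRoot δ y x₂) (x₁ / stripRoot δ x₁ x₂) x₁ := by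
  have hgap : HasDerivAt (fun y : ℝ => δ ^ 2 - (x₂ - y ^ 2)) (2 * x₁) x₁ := by
    simpa using ((hasDerivAt_pow 2 x₁).const_sub x₂).const_sub (δ ^ 2)
  exact (hgap.sqrt h.ne').congr_deriv (mul_div_mul_left _ _ two_ne_zero)

theorem hasDerivAt_stripRoot_snd (h : 0 < δ ^ 2 - (x₂ - x₁ ^ 2)) :
    HasDerivAt (fun y => stripRoot δ x₁ y) (-1 / (2 * stripRoot δ x₁ x₂)) x₂ := by
  have hgap : HasDerivAt (fun y : ℝ => δ ^ 2 - (y - x₁ ^ 2)) (-1) x₂ := by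
    simpa using ((hasDerivAt_id x₂).sub_const (x₁ ^ 2)).const_sub (δ ^ 2)
  exact hgap.sqrt h.ne'

theorem hasDerivAt_tangentAbscissa_fst (h : 0 < δ ^ 2 - (x₂ - x₁ ^ 2)) :
    HasDerivAt (fun y => tangentAbscissa δ y x₂)
      (tangentAbscissa δ x₁ x₂ / stripRoot δ x₁ x₂) x₁ := by
  refine ((hasDerivAt_id x₁).add (hasDerivAt_stripRoot_fst h)).congr_deriv ?_
  rw [tangentAbscissa, add_div, div_self (stripRoot_ne_zero h), add_comm]

theorem hasDerivAt_tangentAbscissa_snd (h : 0 < δ ^ 2 - (x₂ - x₁ ^ 2)) :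
    HasDerivAt (fun y => tangentAbscissa δ x₁ y) (-1 / (2 * stripRoot δ x₁ x₂)) x₂ :=
  (hasDerivAt_stripRoot_snd h).const_add x₁

theorem hasDerivAt_expBellman_fst (h : 0 < δ ^ 2 - (x₂ - x₁ ^ 2)) :
    HasDerivAt (fun y => expBellman δ y x₂)
      (expBellmanDerivFst δ (tangentAbscissa δ x₁ x₂)) x₁ := by
  have hs := stripRoot_ne_zero h
  refine ((((hasDerivAt_stripRoot_fst h).const_sub 1).div_const (1 - δ)).mul
    ((hasDerivAt_tangentAbscissa_fst h).sub_const δ).exp).congr_deriv ?_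
  rw [expBellmanDerivFst, tangentAbscissa]
  field_simp
  ring

theorem hasDerivAt_expBellman_snd (h : 0 < δ ^ 2 - (x₂ - x₁ ^ 2)) :
    HasDerivAt (fun y => expBellman δ x₁ y)
      (expBellmanDerivSnd δ (tangentAbscissa δ x₁ x₂)) x₂ := by
  have hs := stripRoot_ne_zero h
  refine ((((hasDerivAt_stripRoot_snd h).const_sub 1).div_const (1 - δ)).mul
    ((hasDerivAt_tangentAbscissa_snd h).sub_const δ).exp).congr_deriv ?_
  rw [expBellmanDerivSnd]
  field_simp
  ring

end Derivatives

theorem hasDerivAt_expBellmanDerivFst (δ a : ℝ) :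
    HasDerivAt (expBellmanDerivFst δ) (-a / (1 - δ) * exp (a - δ)) a := by
  refine ((((hasDerivAt_id a).const_sub 1).div_const (1 - δ)).mul
    ((hasDerivAt_id a).sub_const δ).exp).congr_deriv ?_
  rw [id]
  ring

theorem hasDerivAt_expBellmanDerivSnd (δ a : ℝ) :
    HasDerivAt (expBellmanDerivSnd δ) (expBellmanDerivSnd δ a) a :=
  ((((hasDerivAt_id a).sub_const δ).exp.div_const (1 - δ)).div_const 2).congr_deriv
    (by rw [mul_one]; rfl)

theorem expBellman_hessian_det_eq_zero {δ x₁ x₂ : ℝ} (h : 0 < δ ^ 2 - (x₂ - x₁ ^ 2)) :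
    deriv (fun y => deriv (fun z => expBellman δ z x₂) y) x₁ *
        deriv (fun y => deriv (fun z => expBellman δ x₁ z) y) x₂ -
      (deriv (fun y => deriv (fun z => expBellman δ z y) x₁) x₂) ^ 2 = 0 := by
  set a := tangentAbscissa δ x₁ x₂
  set s := stripRoot δ x₁ x₂
  have near_x₁ : ∀ᶠ y in 𝓝 x₁, 0 < δ ^ 2 - (x₂ - y ^ 2) :=
    continuousAt_const.eventually_lt (by fun_prop) h
  have near_x₂ : ∀ᶠ y in 𝓝 x₂, 0 < δ ^ 2 - (y - x₁ ^ 2) :=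
    continuousAt_const.eventually_lt (by fun_prop) h
  have h₁₁ : deriv (fun y => deriv (fun z => expBellman δ z x₂) y) x₁
      = -a / (1 - δ) * exp (a - δ) * (a / s) :=
    deriv_deriv_eq_of_eventually_hasDerivAt (near_x₁.mono fun _ hy => hasDerivAt_expBellman_fst hy)
      (by exact (hasDerivAt_expBellmanDerivFst δ a).comp x₁ (hasDerivAt_tangentAbscissa_fst h))
  have h₂₂ : deriv (fun y => deriv (fun z => expBellman δ x₁ z) y) x₂
      = expBellmanDerivSnd δ a * (-1 / (2 * s)) :=
    deriv_deriv_eq_of_eventually_hasDerivAt (near_x₂.mono fun _ hy => hasDerivAt_expBellman_snd hy)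
      (by exact (hasDerivAt_expBellmanDerivSnd δ a).comp x₂ (hasDerivAt_tangentAbscissa_snd h))
  have h₁₂ : deriv (fun y => deriv (fun z => expBellman δ z y) x₁) x₂
      = -a / (1 - δ) * exp (a - δ) * (-1 / (2 * s)) :=
    (((hasDerivAt_expBellmanDerivFst δ a).comp x₂
      (hasDerivAt_tangentAbscissa_snd h)).congr_of_eventuallyEq
        (near_x₂.mono fun _ hy => (hasDerivAt_expBellman_fst hy).deriv)).deriv
  rw [h₁₁, h₂₂, h₁₂, expBellmanDerivSnd]
  ring

theorem expBellman_sq_eq_exp {δ : ℝ} (hδ0 : 0 < δ) (hδ1 : δ < 1) (x : ℝ) :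
    expBellman δ x (x ^ 2) = exp x := by
  have hroot : stripRoot δ x (x ^ 2) = δ := by
    rw [stripRoot, sub_self, sub_zero, Real.sqrt_sq hδ0.le]
  rw [expBellman, tangentAbscissa, hroot, div_self (sub_ne_zero.2 hδ1.ne'), one_mul,
    add_sub_cancel_right]

theorem expBellman_shift (δ x₁ x₂ t : ℝ) :
    expBellman δ (x₁ + t) (x₂ + 2 * x₁ * t + t ^ 2) = exp t * expBellman δ x₁ x₂ := by
  have hroot : stripRoot δ (x₁ + t) (x₂ + 2 * x₁ * t + t ^ 2) = stripRoot δ x₁ x₂ := by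
    simp only [stripRoot]
    ring_nf
  simp only [expBellman, tangentAbscissa, hroot]
  rw [show x₁ + t + stripRoot δ x₁ x₂ - δ = t + (x₁ + stripRoot δ x₁ x₂ - δ) by ring, exp_add]
  ring

/-- B(x₁,x₂) = ((1-√(δ²-(x₂-x₁²)))/(1-δ))·e^{x₁+√(δ²-(x₂-x₁²))-δ}
satisfies the degenerate Monge–Ampère equation B₁₁B₂₂ - B₁₂² = 0 in the interior of the
parabolic strip {x₁² < x₂ < x₁² + δ²}, the boundary condition B(x₁,x₁²) = e^{x₁}, and
the homogeneity B(x₁+t, x₂+2x₁t+t²) = e^t B(x₁,x₂). -/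
theorem stmt19 (δ : ℝ) (hδ0 : 0 < δ) (hδ1 : δ < 1)
    (B : ℝ → ℝ → ℝ)
    (hB : ∀ x₁ x₂ : ℝ, B x₁ x₂ =
      ((1 - Real.sqrt (δ^2 - (x₂ - x₁^2)))/(1 - δ)) *
        Real.exp (x₁ + Real.sqrt (δ^2 - (x₂ - x₁^2)) - δ)) :
    (∀ x₁ x₂ : ℝ, x₁^2 < x₂ → x₂ < x₁^2 + δ^2 →
      deriv (fun y => deriv (fun z => B z x₂) y) x₁ *
        deriv (fun y => deriv (fun z => B x₁ z) y) x₂ -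
      (deriv (fun y => deriv (fun z => B z y) x₁) x₂)^2 = 0) ∧
    (∀ x₁ : ℝ, B x₁ (x₁^2) = Real.exp x₁) ∧
    (∀ x₁ x₂ t : ℝ, B (x₁ + t) (x₂ + 2*x₁*t + t^2) = Real.exp t * B x₁ x₂) := by
  obtain rfl : B = expBellman δ := funext fun x₁ => funext (hB x₁)
  exact ⟨fun _ _ _ hupper => expBellman_hessian_det_eq_zero (by linarith),
    expBellman_sq_eq_exp hδ0 hδ1, expBellman_shift δ⟩
end
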